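/- arXiv:2107.03785 — 8 statements merged into one kernel-verified Lean document; each statement's English description precedes it below -/
import Mathlib

section
/- For all ω, λ ∈ ℂ and every smooth compactly supported f = (f₁,f₂) : (0,∞) → ℂ², the imaginary part of the quadratic form of the Dirac–Coulomb operator is Im ∫₀^∞ f(x)* (D_{ω,λ}f)(x) dx = −Im(λ+ω) ∫₀^∞ |f₁(x)|²/x dx − Im(λ−ω) ∫₀^∞ |f₂(x)|²/x dx, where f(x)* v = conj(f₁(x))v₁ + conj(f₂(x))v₂ is the Hermitian pairing. -/
/-!
Write `c = λ + ω` and `d = λ - ω`. Pointwise, the Coulomb part of `conj f · D f` is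
`-(c / x) |f₁|² - (d / x) |f₂|²`, with imaginary part `-Im c |f₁|² / x - Im d |f₂|² / x`, while the
imaginary part of the kinetic part `conj f₂ f₁' - conj f₁ f₂'` is the derivative of
`Im (conj f₂ f₁)`. That function is `C¹` with compact support in `(0, ∞)`, so its derivative
integrates to zero over `(0, ∞)`.
-/

open MeasureTheory

/-- The formal 1-dimensional Dirac-Coulomb operator `D_{ω,λ}`. -/
noncomputable def diracCoulomb (ω lam : ℂ) (f : ℝ → ℂ × ℂ) : ℝ → ℂ × ℂ :=
  fun x =>
    (-((lam + ω) / (x : ℂ)) * (f x).1 - deriv (fun y => (f y).2) x,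
     deriv (fun y => (f y).1) x - ((lam - ω) / (x : ℂ)) * (f x).2)

open Function ComplexConjugate

lemma ContinuousOn.integrable_of_support_subset_isCompact {X E : Type*} [TopologicalSpace X]
    [T2Space X] [MeasurableSpace X] [OpensMeasurableSpace X] {μ : Measure X}
    [IsFiniteMeasureOnCompacts μ] [NormedAddCommGroup E] {g : X → E} {K : Set X}
    (hg : ContinuousOn g K) (hK : IsCompact K) (hs : support g ⊆ K) : Integrable g μ :=
  (integrableOn_iff_integrable_of_support_subset hs).1 (hg.integrableOn_compact hK)

lemma integrable_norm_comp_sq_div_self {E F : Type*} [NormedAddCommGroup E]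
    [NormedAddCommGroup F] {f : ℝ → E} {u : E → F} (hf : Continuous f) (hfc : HasCompactSupport f)
    (hfs : tsupport f ⊆ Set.Ioi 0) (hu : Continuous u) (hu₀ : u 0 = 0) :
    Integrable fun x => ‖u (f x)‖ ^ 2 / x :=
  ContinuousOn.integrable_of_support_subset_isCompact
    (((hu.comp hf).norm.pow 2).continuousOn.div continuousOn_id fun _ hx => (hfs hx).ne') hfc
    (support_subset_iff'.2 fun x hx => by simp [image_eq_zero_of_notMem_tsupport hx, hu₀])

lemma hasDerivAt_im_conj_mul {u v : ℝ → ℂ} {u' v' : ℂ} {x : ℝ} (hu : HasDerivAt u u' x)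
    (hv : HasDerivAt v v' x) :
    HasDerivAt (fun y => (conj (u y) * v y).im) ((conj u' * v x + conj (u x) * v').im) x :=
  Complex.imCLM.hasFDerivAt.comp_hasDerivAt x (hu.star.mul hv)

lemma im_pairing_diracCoulomb (ω lam : ℂ) {f : ℝ → ℂ × ℂ} (hf : Differentiable ℝ f) (x : ℝ) :
    (conj (f x).1 * (diracCoulomb ω lam f x).1 + conj (f x).2 * (diracCoulomb ω lam f x).2).im =
      -(lam + ω).im * (‖(f x).1‖ ^ 2 / x) - (lam - ω).im * (‖(f x).2‖ ^ 2 / x) +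
        deriv (fun y => (conj (f y).2 * (f y).1).im) x := by
  rw [(hasDerivAt_im_conj_mul (hf.snd x).hasDerivAt (hf.fst x).hasDerivAt).deriv, diracCoulomb]
  generalize (f x).1 = a, (f x).2 = b, deriv (fun y => (f y).1) x = a',
    deriv (fun y => (f y).2) x = b'
  have hsplit : conj a * (-((lam + ω) / x) * a - b') + conj b * (a' - (lam - ω) / x * b) =
      -((lam + ω) / x) * (conj a * a) - (lam - ω) / x * (conj b * b) +
        (conj b * a' - conj a * b') := by
    ring
  rw [hsplit, Complex.conj_mul', Complex.conj_mul']
  simp only [← Complex.ofReal_pow, Complex.add_im, Complex.sub_im, Complex.neg_im, Complex.mul_im,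
    Complex.neg_re, Complex.div_ofReal_re, Complex.div_ofReal_im, Complex.ofReal_re,
    Complex.ofReal_im, Complex.conj_re, Complex.conj_im]
  ring

lemma integrable_pairing_diracCoulomb (ω lam : ℂ) {f : ℝ → ℂ × ℂ} (hf : ContDiff ℝ 1 f)
    (hfc : HasCompactSupport f) (hfs : tsupport f ⊆ Set.Ioi 0) :
    Integrable fun x =>
      conj (f x).1 * (diracCoulomb ω lam f x).1 + conj (f x).2 * (diracCoulomb ω lam f x).2 := by
  have hc : Continuous f := hf.continuous
  have h₁ : Continuous (deriv fun y => (f y).1) := hf.fst.continuous_deriv le_rfl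
  have h₂ : Continuous (deriv fun y => (f y).2) := hf.snd.continuous_deriv le_rfl
  have h₀ : ∀ x ∈ tsupport f, (x : ℂ) ≠ 0 := fun x hx => by exact_mod_cast (hfs hx).ne'
  have hconj := Complex.continuous_conj
  refine ContinuousOn.integrable_of_support_subset_isCompact ?_ hfc
    (support_subset_iff'.2 fun x hx => by simp [diracCoulomb, image_eq_zero_of_notMem_tsupport hx])
  simp only [diracCoulomb]
  fun_prop (disch := assumption)

/-- The imaginary part of the quadratic form of the Dirac-Coulomb operator on a smooth
compactly supported test function. -/
theorem diracCoulomb_im_quadratic_form (ω lam : ℂ) (f : ℝ → ℂ × ℂ)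
    (hf : ContDiff ℝ (⊤ : ℕ∞) f) (hfc : HasCompactSupport f)
    (hfs : tsupport f ⊆ Set.Ioi 0) :
    (∫ x in Set.Ioi (0 : ℝ),
        ((starRingEnd ℂ) (f x).1 * (diracCoulomb ω lam f x).1 +
          (starRingEnd ℂ) (f x).2 * (diracCoulomb ω lam f x).2)).im =
      -(lam + ω).im * (∫ x in Set.Ioi (0 : ℝ), ‖(f x).1‖ ^ 2 / x) -
        (lam - ω).im * (∫ x in Set.Ioi (0 : ℝ), ‖(f x).2‖ ^ 2 / x) := by
  have hf₁ : ContDiff ℝ 1 f := hf.of_le (by simp)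
  set g : ℝ → ℝ := fun x => (conj (f x).2 * (f x).1).im
  have hg : ContDiff ℝ 1 g :=
    Complex.imCLM.contDiff.comp ((Complex.conjCLE.contDiff.comp hf₁.snd).mul hf₁.fst)
  have hgc : HasCompactSupport g :=
    hfc.comp_left (g := fun p : ℂ × ℂ => (conj p.2 * p.1).im) (by simp)
  have hg₀ : g 0 = 0 := by
    have : f 0 = 0 := image_eq_zero_of_notMem_tsupport fun h => (Set.mem_Ioi.1 (hfs h)).false
    simp [g, this]
  have h₁ := (integrable_norm_comp_sq_div_self hf₁.continuous hfc hfs continuous_fst rfl).const_mul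
    (-(lam + ω).im)
  have h₂ := (integrable_norm_comp_sq_div_self hf₁.continuous hfc hfs continuous_snd rfl).const_mul
    (lam - ω).im
  have hg' : Integrable (deriv g) :=
    (hg.continuous_deriv le_rfl).integrable_of_hasCompactSupport hgc.deriv
  refine (integral_im
    (integrable_pairing_diracCoulomb ω lam hf₁ hfc hfs).integrableOn).symm.trans ?_
  simp only [RCLike.im_to_complex, im_pairing_diracCoulomb ω lam (hf₁.differentiable one_ne_zero)]
  rw [integral_add (h₁.sub' h₂).integrableOn hg'.integrableOn,
    integral_sub h₁.integrableOn h₂.integrableOn, integral_const_mul, integral_const_mul,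
    hgc.integral_Ioi_deriv_eq hg, hg₀, neg_zero, add_zero]
end

section
/- Let ω, λ, μ ∈ ℂ satisfy μ² = ω² − λ², μ ≠ 0 and ω + λ ≠ 0. A differentiable function f = (f₁, f₂) : (0,∞) → ℂ² satisfies D_{ω,λ} f = 0 on (0,∞) if and only if there exist constants c₁, c₂ ∈ ℂ such that f(x) = c₁ x^μ (−μ, ω+λ) + c₂ x^{−μ} (μ, ω+λ) for all x > 0, where x^{±μ} = exp(±μ log x). -/
/-!
For `ν² = ω² − λ²` the quantity `x^ν ((ω + λ) f₁ + ν f₂)` is a first integral of `D_{ω,λ} f = 0`: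
along a solution its derivative is `x^(ν-1) (ν² − ω² + λ²) f₂ = 0`. Taking `ν = ±μ` gives two
conserved quantities, and as `μ ≠ 0` and `ω + λ ≠ 0` the two linear forms `(ω + λ) f₁ ± μ f₂`
determine `f`. Conversely, the homogeneous solutions are checked by differentiating.
-/

open Set Filter Topology

namespace DiracCoulomb

noncomputable section

def zeroMode (ω lam μ c₁ c₂ : ℂ) (x : ℝ) : ℂ × ℂ :=
  (c₁ * (x : ℂ) ^ μ * (-μ) + c₂ * (x : ℂ) ^ (-μ) * μ,
    c₁ * (x : ℂ) ^ μ * (ω + lam) + c₂ * (x : ℂ) ^ (-μ) * (ω + lam))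

def firstIntegral (ω lam ν : ℂ) (u v : ℝ → ℂ) (x : ℝ) : ℂ :=
  (x : ℂ) ^ ν * ((ω + lam) * u x + ν * v x)

theorem hasDerivAt_ofReal_cpow_const_of_pos (ν : ℂ) {x : ℝ} (hx : 0 < x) :
    HasDerivAt (fun y : ℝ => (y : ℂ) ^ ν) (ν * (x : ℂ) ^ ν / x) x := by
  have hxC : (x : ℂ) ≠ 0 := by exact_mod_cast hx.ne'
  convert (Complex.hasStrictDerivAt_cpow_const
    (Complex.ofReal_mem_slitPlane.2 hx)).hasDerivAt.comp_ofReal using 1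
  rw [Complex.cpow_sub _ _ hxC, Complex.cpow_one, mul_div_assoc]

variable {ω lam μ : ℂ} {u v : ℝ → ℂ} {x : ℝ}

theorem hasDerivAt_firstIntegral {ν : ℂ} (hν : ν ^ 2 = ω ^ 2 - lam ^ 2) (hx : 0 < x)
    (hu : HasDerivAt u ((lam - ω) / x * v x) x) (hv : HasDerivAt v (-((lam + ω) / x) * u x) x) :
    HasDerivAt (firstIntegral ω lam ν u v) 0 x := by
  have hxC : (x : ℂ) ≠ 0 := by exact_mod_cast hx.ne'
  refine ((hasDerivAt_ofReal_cpow_const_of_pos ν hx).mul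
    ((hu.const_mul (ω + lam)).add (hv.const_mul ν))).congr_deriv ?_
  simp only [Pi.add_apply]
  field_simp
  linear_combination (x : ℂ) ^ ν * v x * hν

theorem exists_firstIntegral_eq {ν : ℂ} (hν : ν ^ 2 = ω ^ 2 - lam ^ 2)
    (hu : ∀ x ∈ Ioi (0 : ℝ), HasDerivAt u ((lam - ω) / x * v x) x)
    (hv : ∀ x ∈ Ioi (0 : ℝ), HasDerivAt v (-((lam + ω) / x) * u x) x) :
    ∃ a, ∀ x ∈ Ioi (0 : ℝ), firstIntegral ω lam ν u v x = a :=
  have hI := fun x (hx : x ∈ Ioi (0 : ℝ)) => hasDerivAt_firstIntegral hν hx (hu x hx) (hv x hx)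
  isOpen_Ioi.exists_is_const_of_deriv_eq_zero isPreconnected_Ioi
    (fun x hx => (hI x hx).differentiableAt.differentiableWithinAt) (fun x hx => (hI x hx).deriv)

theorem eq_zeroMode_of_firstIntegral_eq {A B : ℂ} (hμ : μ ≠ 0) (hωlam : ω + lam ≠ 0)
    (hx : 0 < x) (hA : firstIntegral ω lam μ u v x = A)
    (hB : firstIntegral ω lam (-μ) u v x = B) :
    (u x, v x) = zeroMode ω lam μ (-B / (2 * μ * (ω + lam))) (A / (2 * μ * (ω + lam))) x := by
  have hxC : (x : ℂ) ≠ 0 := by exact_mod_cast hx.ne'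
  have hinv : (x : ℂ) ^ μ * (x : ℂ) ^ (-μ) = 1 := by
    rw [← Complex.cpow_add _ _ hxC, add_neg_cancel, Complex.cpow_zero]
  unfold firstIntegral at hA hB
  refine Prod.ext ?_ ?_ <;> simp only [zeroMode] <;> field_simp
  · linear_combination (x : ℂ) ^ (-μ) * hA + (x : ℂ) ^ μ * hB - 2 * (ω + lam) * u x * hinv
  · linear_combination (x : ℂ) ^ (-μ) * hA - (x : ℂ) ^ μ * hB - 2 * μ * v x * hinv

variable {c₁ c₂ : ℂ}

theorem hasDerivAt_zeroMode_fst (h : μ ^ 2 = ω ^ 2 - lam ^ 2) (hx : 0 < x) :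
    HasDerivAt (fun y => (zeroMode ω lam μ c₁ c₂ y).1)
      ((lam - ω) / x * (zeroMode ω lam μ c₁ c₂ x).2) x := by
  have hxC : (x : ℂ) ≠ 0 := by exact_mod_cast hx.ne'
  refine ((((hasDerivAt_ofReal_cpow_const_of_pos μ hx).const_mul c₁).mul_const (-μ)).add
    (((hasDerivAt_ofReal_cpow_const_of_pos (-μ) hx).const_mul c₂).mul_const μ)).congr_deriv ?_
  simp only [zeroMode]
  field_simp
  linear_combination (-((x : ℂ) ^ μ * c₁ + (x : ℂ) ^ (-μ) * c₂)) * h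

theorem hasDerivAt_zeroMode_snd (hx : 0 < x) :
    HasDerivAt (fun y => (zeroMode ω lam μ c₁ c₂ y).2)
      (-((lam + ω) / x) * (zeroMode ω lam μ c₁ c₂ x).1) x := by
  refine ((((hasDerivAt_ofReal_cpow_const_of_pos μ hx).const_mul c₁).mul_const (ω + lam)).add
    (((hasDerivAt_ofReal_cpow_const_of_pos (-μ) hx).const_mul c₂).mul_const
      (ω + lam))).congr_deriv ?_
  simp only [zeroMode]
  field_simp
  ring

end

end DiracCoulomb

open DiracCoulomb

/-- Characterization of the zero-energy kernel of the Dirac-Coulomb operator for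
`μ² = ω² − λ²`, `μ ≠ 0`, `ω + λ ≠ 0`: a differentiable function solves `D_{ω,λ} f = 0`
on `(0,∞)` iff it is a combination of the homogeneous solutions
`x^μ (−μ, ω+λ)` and `x^{−μ} (μ, ω+λ)`. -/
theorem diracCoulomb_kernel_characterization (ω lam μ : ℂ)
    (h : μ ^ 2 = ω ^ 2 - lam ^ 2) (hμ : μ ≠ 0) (hωlam : ω + lam ≠ 0)
    (f : ℝ → ℂ × ℂ)
    (hdiff : ∀ x ∈ Set.Ioi (0 : ℝ),
      DifferentiableAt ℝ (fun y => (f y).1) x ∧ DifferentiableAt ℝ (fun y => (f y).2) x) :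
    (∀ x ∈ Set.Ioi (0 : ℝ),
        -((lam + ω) / (x : ℂ)) * (f x).1 - deriv (fun y => (f y).2) x = 0 ∧
        deriv (fun y => (f y).1) x - ((lam - ω) / (x : ℂ)) * (f x).2 = 0) ↔
      ∃ c₁ c₂ : ℂ, ∀ x ∈ Set.Ioi (0 : ℝ),
        f x = (c₁ * (x : ℂ) ^ μ * (-μ) + c₂ * (x : ℂ) ^ (-μ) * μ,
               c₁ * (x : ℂ) ^ μ * (ω + lam) + c₂ * (x : ℂ) ^ (-μ) * (ω + lam)) := by
  constructor
  · intro hode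
    have hu : ∀ x ∈ Ioi (0 : ℝ), HasDerivAt (fun y => (f y).1) ((lam - ω) / x * (f x).2) x :=
      fun x hx => (hdiff x hx).1.hasDerivAt.congr_deriv (by linear_combination (hode x hx).2)
    have hv : ∀ x ∈ Ioi (0 : ℝ), HasDerivAt (fun y => (f y).2) (-((lam + ω) / x) * (f x).1) x :=
      fun x hx => (hdiff x hx).2.hasDerivAt.congr_deriv (by linear_combination -(hode x hx).1)
    obtain ⟨A, hA⟩ := exists_firstIntegral_eq h hu hv
    obtain ⟨B, hB⟩ := exists_firstIntegral_eq (ν := -μ) (by rw [neg_sq, h]) hu hv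
    exact ⟨_, _, fun x hx => eq_zeroMode_of_firstIntegral_eq hμ hωlam hx (hA x hx) (hB x hx)⟩
  · rintro ⟨c₁, c₂, hc⟩ x hx
    have hf : f =ᶠ[𝓝 x] zeroMode ω lam μ c₁ c₂ := eventually_of_mem (Ioi_mem_nhds hx) hc
    have hf₁ : HasDerivAt (fun y => (f y).1) _ x :=
      (hasDerivAt_zeroMode_fst h hx).congr_of_eventuallyEq (hf.fun_comp Prod.fst)
    have hf₂ : HasDerivAt (fun y => (f y).2) _ x :=
      (hasDerivAt_zeroMode_snd hx).congr_of_eventuallyEq (hf.fun_comp Prod.snd)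
    rw [hf₁.deriv, hf₂.deriv, hc x hx]
    exact ⟨sub_self _, sub_self _⟩
end

section
/- Let A be a unital associative algebra over ℂ, d a positive integer, and α₁,…,α_d ∈ A with α_iα_j + α_jα_i = 2δ_{ij}·1. Define σ_{ij} = −(i/2)(α_iα_j − α_jα_i). Then for all indices i,j,k,l ∈ {1,…,d}: (1/2)(σ_{ij}σ_{kl} + σ_{kl}σ_{ij}) = −(1/24) Σ_{π ∈ S₄} sgn(π) α_{a_{π(1)}} α_{a_{π(2)}} α_{a_{π(3)}} α_{a_{π(4)}} + (δ_{ik}δ_{jl} − δ_{il}δ_{jk})·1, where (a₁,a₂,a₃,a₄) = (i,j,k,l). -/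
open scoped BigOperators


lemma perm_succ_sum {n : ℕ} {M : Type*} [AddCommMonoid M] (f : Equiv.Perm (Fin (n+1)) → M) :
    ∑ π : Equiv.Perm (Fin (n+1)), f π =
      ∑ p : Fin (n+1), ∑ e : Equiv.Perm (Fin n), f (Equiv.Perm.decomposeFin.symm (p, e)) := by
  rw [← Equiv.sum_comp (Equiv.Perm.decomposeFin.symm) f, Fintype.sum_prod_type]

lemma sum_perm_fin4 {M : Type*} [AddCommGroup M] (g : Fin 4 → Fin 4 → Fin 4 → Fin 4 → M) :
    (∑ π : Equiv.Perm (Fin 4), ((Equiv.Perm.sign π : ℤ) • g (π 0) (π 1) (π 2) (π 3))) =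
      g 0 1 2 3 - g 0 1 3 2 - g 0 2 1 3 + g 0 2 3 1 + g 0 3 1 2 - g 0 3 2 1 - g 1 0 2 3 + g 1 0 3 2 + g 1 2 0 3 - g 1 2 3 0 - g 1 3 0 2 + g 1 3 2 0 + g 2 0 1 3 - g 2 0 3 1 - g 2 1 0 3 + g 2 1 3 0 + g 2 3 0 1 - g 2 3 1 0 - g 3 0 1 2 + g 3 0 2 1 + g 3 1 0 2 - g 3 1 2 0 - g 3 2 0 1 + g 3 2 1 0 := by
  simp only [perm_succ_sum]
  simp only [Fin.sum_univ_succ, Finset.univ_unique, Finset.sum_singleton,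
    Finset.univ_eq_empty, Finset.sum_empty]
  simp (config := { decide := true }) only [Equiv.Perm.decomposeFin.symm_sign,
    show ((1:Fin 4) = (0:Fin 3).succ) from rfl, show ((2:Fin 4) = (1:Fin 3).succ) from rfl,
    show ((3:Fin 4) = (2:Fin 3).succ) from rfl,
    show ((1:Fin 3) = (0:Fin 2).succ) from rfl, show ((2:Fin 3) = (1:Fin 2).succ) from rfl,
    show ((1:Fin 2) = (0:Fin 1).succ) from rfl,
    Equiv.Perm.decomposeFin_symm_apply_zero, Equiv.Perm.decomposeFin_symm_apply_succ,
    Equiv.swap_apply_def, Equiv.Perm.sign_one, Equiv.Perm.one_apply,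
    show (default : Equiv.Perm (Fin 0)) = 1 from rfl, show (default : Fin 1) = 0 from rfl,
    if_true, if_false,
    mul_one, one_mul, Units.val_one, Units.val_neg, one_smul, neg_smul, neg_neg,
    Units.val_mul, neg_mul, mul_neg, Int.reduceNeg, add_zero, zero_add]
  abel

/-- The spin generators of a Clifford algebra: `σ_{ij} = −(i/2)(α_iα_j − α_jα_i)`. -/
noncomputable def cliffordSigma {A : Type*} [Ring A] [Algebra ℂ A] {d : ℕ}
    (α : Fin d → A) (i j : Fin d) : A :=
  (-(Complex.I) / 2) • (α i * α j - α j * α i)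

/-- Anticommutator identity for the spin generators of a Clifford algebra:
`(1/2)[σ_{ij}, σ_{kl}]₊ = −α_{[i}α_jα_kα_{l]} + (δ_{ik}δ_{jl} − δ_{il}δ_{jk})·1`,
where the skew-symmetrization is `(1/24) Σ_{π ∈ S₄} sgn(π) α_{a_{π(1)}}⋯α_{a_{π(4)}}`. -/
theorem cliffordSigma_anticommutator {A : Type*} [Ring A] [Algebra ℂ A]
    (d : ℕ) (hd : 0 < d) (α : Fin d → A)
    (hcl : ∀ i j, α i * α j + α j * α i = if i = j then (2 : A) else 0)
    (i j k l : Fin d) :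
    (1 / 2 : ℂ) • (cliffordSigma α i j * cliffordSigma α k l +
        cliffordSigma α k l * cliffordSigma α i j) =
      (-(1 / 24) : ℂ) • (∑ π : Equiv.Perm (Fin 4),
          ((Equiv.Perm.sign π : ℤ) •
            (α (![i, j, k, l] (π 0)) * α (![i, j, k, l] (π 1)) *
              α (![i, j, k, l] (π 2)) * α (![i, j, k, l] (π 3))))) +
        (((if i = k then 1 else 0) * (if j = l then 1 else 0) -
            (if i = l then 1 else 0) * (if j = k then 1 else 0) : ℂ)) • (1 : A) := by
  have key : ((2:ℂ) • (1:A)) = (2:A) := by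
    rw [← Algebra.algebraMap_eq_smul_one]; exact map_ofNat _ 2
  have hswap : ∀ a b : Fin d, α b * α a = (if a = b then (2:ℂ) else 0) • (1:A) - α a * α b := by
    intro a b
    have h := hcl a b
    have hc : (if a = b then (2:A) else 0) = (if a = b then (2:ℂ) else 0) • (1:A) := by
      split_ifs
      · exact key.symm
      · simp
    rw [← hc]
    exact eq_sub_of_add_eq' h
  have hsq : ∀ a : Fin d, α a * α a = (1:A) := by
    intro a
    have h2 : (2:ℂ) • (α a * α a) = (2:ℂ) • (1:A) := by
      rw [two_smul, key]
      simpa using hcl a a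
    calc α a * α a = (2:ℂ)⁻¹ • ((2:ℂ) • (α a * α a)) := by
          rw [smul_smul, inv_mul_cancel₀ two_ne_zero, one_smul]
      _ = (2:ℂ)⁻¹ • ((2:ℂ) • (1:A)) := by rw [h2]
      _ = 1 := by rw [smul_smul, inv_mul_cancel₀ two_ne_zero, one_smul]
  have hswap' : ∀ a b : Fin d, ∀ y : A,
      α b * (α a * y) = (if a = b then (2:ℂ) else 0) • y - α a * (α b * y) := by
    intro a b y
    rw [← mul_assoc, hswap a b, sub_mul, smul_mul_assoc, one_mul, mul_assoc]
  have hsq' : ∀ a : Fin d, ∀ y : A, α a * (α a * y) = y := by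
    intro a y
    rw [← mul_assoc, hsq a, one_mul]
  have hmul : ∀ X Y : A, ((-(Complex.I)/2) • X) * ((-(Complex.I)/2) • Y)
      = (-(1/4:ℂ)) • (X * Y) := by
    intro X Y
    rw [smul_mul_smul_comm]
    congr 1
    have hI := Complex.I_mul_I
    linear_combination (1/4 : ℂ) * hI
  have hδ : ((if i = k then 1 else 0) * (if j = l then 1 else 0) -
      (if i = l then 1 else 0) * (if j = k then 1 else 0) : ℂ) =
      ((if i = k then (2:ℂ) else 0) * (if j = l then (2:ℂ) else 0) -
       (if i = l then (2:ℂ) else 0) * (if j = k then (2:ℂ) else 0)) / 4 := by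
    split_ifs <;> norm_num
  rw [hδ]
  rw [sum_perm_fin4 (fun a b c d => α (![i, j, k, l] a) * α (![i, j, k, l] b) *
      α (![i, j, k, l] c) * α (![i, j, k, l] d))]
  simp only [Matrix.cons_val_zero, Matrix.cons_val_one, Matrix.head_cons,
    Matrix.cons_val_two, Matrix.cons_val_three, Matrix.tail_cons]
  simp only [cliffordSigma, hmul]
  simp only [mul_sub, sub_mul, mul_add, add_mul, smul_sub, smul_add, smul_smul,
    mul_assoc, smul_mul_assoc, mul_smul_comm, mul_one, one_mul,
    hswap i j, hswap' i j, hswap i k, hswap' i k, hswap j k, hswap' j k,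
    hswap i l, hswap' i l, hswap j l, hswap' j l, hswap k l, hswap' k l,
    hsq, hsq']
  match_scalars <;> ring
end

section
/- Let α ∈ ℂ with Re α ≥ 0. For t ≥ 0 define the operator U_t on L²((0,∞)) by (U_t f)(x) = x^α (x+t)^{−α} f(x+t), where complex powers of positive reals are exp(α log x). Then: (i) for every f ∈ L²((0,∞)), U_t f ∈ L²((0,∞)) with ‖U_t f‖ ≤ ‖f‖ (each U_t is a linear contraction); (ii) U_t U_s = U_{t+s} for all s,t ≥ 0 and U_0 is the identity; (iii) for every f ∈ L²((0,∞)) the map t ↦ U_t f is continuous from [0,∞) to L²((0,∞)). Hence (U_t)_{t≥0} is a strongly continuous semigroup of contractions, with generator the maximal realization of ∂_x − α/x. -/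
/-!
For `Re α ≥ 0` and `x > 0` the multiplier `m_t(x) = x^α (x+t)^{-α}` has modulus
`(x/(x+t))^{Re α} ≤ 1`, so `U_t f` is dominated pointwise by the translate `f(· + t)`, and
translation maps `L²((0,∞))` contractively into itself. The semigroup law is the cocycle identity
`m_t(x) m_s(x+t) = m_{t+s}(x)`. For strong continuity, extend `f` by zero to `g ∈ L²(ℝ)` and split
`U_t f - U_{t₀} f = m_t (g(·+t) - g(·+t₀)) + (m_t - m_{t₀}) g(·+t₀)` on `(0,∞)`: the first term is
controlled by the continuity of translation in `L²(ℝ)`, the second tends to `0` by dominated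
convergence, since `m_t(x) → m_{t₀}(x)` pointwise and `|m_t - m_{t₀}| ≤ 2`.
-/

open MeasureTheory

/-- The translation-dilation family `(U_t f)(x) = x^α (x+t)^{−α} f(x+t)` on the half-line. -/
noncomputable def halfLineSemigroup (α : ℂ) (t : ℝ) (f : ℝ → ℂ) : ℝ → ℂ :=
  fun x => (x : ℂ) ^ α * ((x + t : ℝ) : ℂ) ^ (-α) * f (x + t)

open Filter Set
open scoped ENNReal Topology

theorem norm_ofReal_cpow_mul_ofReal_cpow_neg_le_one {α : ℂ} (hα : 0 ≤ α.re) {x y : ℝ}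
    (hx : 0 < x) (hxy : x ≤ y) : ‖(x : ℂ) ^ α * (y : ℂ) ^ (-α)‖ ≤ 1 := by
  have hy : 0 < y := hx.trans_le hxy
  rw [norm_mul, Complex.norm_cpow_eq_rpow_re_of_pos hx, Complex.norm_cpow_eq_rpow_re_of_pos hy,
    Complex.neg_re, Real.rpow_neg hy.le, ← div_eq_mul_inv, div_le_one (by positivity)]
  exact Real.rpow_le_rpow hx.le hxy hα

theorem Complex.cpow_neg_mul_cpow_self {z : ℂ} (hz : z ≠ 0) (w : ℂ) : z ^ (-w) * z ^ w = 1 := by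
  rw [Complex.cpow_neg, inv_mul_cancel₀ (Complex.cpow_ne_zero_iff.2 (.inl hz))]

theorem tendsto_eLpNorm_of_dominated {X E ι : Type*} [MeasurableSpace X] {μ : Measure X}
    [NormedAddCommGroup E] {l : Filter ι} [l.IsCountablyGenerated] {p : ℝ≥0∞}
    (hp0 : p ≠ 0) (hp : p ≠ ∞) {F : ι → X → E} {bound : X → ℝ}
    (hF_meas : ∀ᶠ i in l, AEStronglyMeasurable (F i) μ)
    (h_bound : ∀ᶠ i in l, ∀ᵐ x ∂μ, ‖F i x‖ ≤ bound x) (h_int : MemLp bound p μ)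
    (h_lim : ∀ᵐ x ∂μ, Tendsto (fun i => F i x) l (𝓝 0)) :
    Tendsto (fun i => eLpNorm (F i) p μ) l (𝓝 0) := by
  have hp_pos : 0 < p.toReal := ENNReal.toReal_pos hp0 hp
  have h_rpow (q : ℝ) (hq : 0 < q) : Tendsto (fun a : ℝ≥0∞ => a ^ q) (𝓝 0) (𝓝 0) := by
    simpa [hq] using (ENNReal.continuous_rpow_const (y := q)).tendsto 0
  simp_rw [eLpNorm_eq_lintegral_rpow_enorm_toReal hp0 hp]
  have h_lint : Tendsto (fun i => ∫⁻ x, ‖F i x‖ₑ ^ p.toReal ∂μ) l (𝓝 0) := by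
    simpa using tendsto_lintegral_filter_of_dominated_convergence' (f := fun _ => 0)
      (fun x => ‖bound x‖ₑ ^ p.toReal)
      (hF_meas.mono fun i hi => hi.enorm.pow_const _)
      (h_bound.mono fun i hi => hi.mono fun x hx =>
        ENNReal.rpow_le_rpow (enorm_le_iff_norm_le.2 (hx.trans (Real.le_norm_self _))) hp_pos.le)
      (lintegral_rpow_enorm_lt_top_of_eLpNorm_lt_top hp0 hp h_int.eLpNorm_lt_top).ne
      (h_lim.mono fun x hx => (h_rpow _ hp_pos).comp (by simpa using hx.enorm))
  exact (h_rpow _ (by positivity)).comp h_lint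

theorem tendsto_eLpNorm_comp_add_right_sub {G E : Type*} [AddGroup G] [TopologicalSpace G]
    [IsTopologicalAddGroup G] [MeasurableSpace G] [BorelSpace G] {μ : Measure G}
    [μ.IsAddRightInvariant] [IsLocallyFiniteMeasure μ] [μ.InnerRegularCompactLTTop]
    [NormedAddCommGroup E] {p : ℝ≥0∞} [Fact (1 ≤ p)] (hp : p ≠ ∞) {g : G → E}
    (hg : MemLp g p μ) (t₀ : G) :
    Tendsto (fun t => eLpNorm (fun x => g (x + t) - g (x + t₀)) p μ) (𝓝 t₀) (𝓝 0) := by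
  have hmp (t : G) : MeasurePreserving (fun x => x + t) μ μ := measurePreserving_add_right μ t
  let shift : G → C(G, G) := fun t => ⟨(· + t), continuous_add_const t⟩
  have h_shift : Continuous shift :=
    ContinuousMap.continuous_of_continuous_uncurry _ (continuous_snd.add continuous_fst)
  let T : G → Lp E p μ := fun t => Lp.compMeasurePreserving (shift t) (hmp t) (hg.toLp g)
  have hT : Tendsto T (𝓝 t₀) (𝓝 (T t₀)) :=
    tendsto_const_nhds.compMeasurePreservingLp (h_shift.tendsto t₀) _ _ hp
  have hT_coe (t : G) : T t =ᵐ[μ] fun x => g (x + t) :=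
    (Lp.coeFn_compMeasurePreserving _ (hmp t)).trans
      ((hmp t).quasiMeasurePreserving.ae_eq_comp hg.coeFn_toLp)
  refine ((tendsto_iff_edist_tendsto_0).1 hT).congr fun t => ?_
  rw [Lp.edist_def]
  exact eLpNorm_congr_ae ((hT_coe t).sub (hT_coe t₀))

theorem measurePreserving_add_const_restrict_Ioi (a t : ℝ) :
    MeasurePreserving (· + t) (volume.restrict (Ioi a)) (volume.restrict (Ioi (a + t))) := by
  simpa using (measurePreserving_add_right volume t).restrict_preimage
    (measurableSet_Ioi (a := a + t))

section Shift

variable {E : Type*} [NormedAddCommGroup E] {p : ℝ≥0∞} {a t : ℝ} {f : ℝ → E}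

theorem MeasureTheory.AEStronglyMeasurable.comp_add_const_restrict_Ioi
    (hf : AEStronglyMeasurable f (volume.restrict (Ioi a))) (ht : 0 ≤ t) :
    AEStronglyMeasurable (fun x => f (x + t)) (volume.restrict (Ioi a)) :=
  (hf.mono_measure (Measure.restrict_mono_set volume (Ioi_subset_Ioi (by linarith))))
    |>.comp_measurePreserving (measurePreserving_add_const_restrict_Ioi a t)

theorem eLpNorm_comp_add_const_restrict_Ioi_le
    (hf : AEStronglyMeasurable f (volume.restrict (Ioi a))) (ht : 0 ≤ t) :
    eLpNorm (fun x => f (x + t)) p (volume.restrict (Ioi a)) ≤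
      eLpNorm f p (volume.restrict (Ioi a)) := by
  have h_le : volume.restrict (Ioi (a + t)) ≤ volume.restrict (Ioi a) :=
    Measure.restrict_mono_set volume (Ioi_subset_Ioi (by linarith))
  exact (eLpNorm_comp_measurePreserving (hf.mono_measure h_le)
    (measurePreserving_add_const_restrict_Ioi a t)).trans_le (eLpNorm_mono_measure f h_le)

end Shift

noncomputable def halfLineMultiplier (α : ℂ) (t x : ℝ) : ℂ :=
  (x : ℂ) ^ α * ((x + t : ℝ) : ℂ) ^ (-α)

section HalfLine

variable {α : ℂ} {s t x : ℝ} {f : ℝ → ℂ}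

theorem halfLineSemigroup_apply :
    halfLineSemigroup α t f x = halfLineMultiplier α t x * f (x + t) := rfl

theorem norm_halfLineMultiplier_le_one (hα : 0 ≤ α.re) (ht : 0 ≤ t) (hx : 0 < x) :
    ‖halfLineMultiplier α t x‖ ≤ 1 :=
  norm_ofReal_cpow_mul_ofReal_cpow_neg_le_one hα hx (by linarith)

theorem measurable_halfLineMultiplier (α : ℂ) (t : ℝ) : Measurable (halfLineMultiplier α t) := by
  unfold halfLineMultiplier
  fun_prop

theorem continuousAt_halfLineMultiplier_param (α : ℂ) (hx : 0 < x + t) :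
    ContinuousAt (fun s => halfLineMultiplier α s x) t := by
  unfold halfLineMultiplier
  exact continuousAt_const.mul (ContinuousAt.cpow (by fun_prop) continuousAt_const
    (Complex.ofReal_mem_slitPlane.2 hx))

theorem halfLineMultiplier_zero (α : ℂ) (hx : x ≠ 0) : halfLineMultiplier α 0 x = 1 := by
  rw [halfLineMultiplier, add_zero, mul_comm,
    Complex.cpow_neg_mul_cpow_self (Complex.ofReal_ne_zero.2 hx)]

theorem halfLineMultiplier_mul (α : ℂ) (hxt : x + t ≠ 0) :
    halfLineMultiplier α t x * halfLineMultiplier α s (x + t) = halfLineMultiplier α (t + s) x := by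
  simp only [halfLineMultiplier, ← add_assoc]
  linear_combination (x : ℂ) ^ α * ((x + t + s : ℝ) : ℂ) ^ (-α) *
    Complex.cpow_neg_mul_cpow_self (Complex.ofReal_ne_zero.2 hxt) α

theorem halfLineSemigroup_const_mul_add (α : ℂ) (t : ℝ) (c : ℂ) (f g : ℝ → ℂ) (x : ℝ) :
    halfLineSemigroup α t (fun y => c * f y + g y) x =
      c * halfLineSemigroup α t f x + halfLineSemigroup α t g x := by
  simp only [halfLineSemigroup_apply]
  ring

theorem halfLineSemigroup_zero_apply (α : ℂ) (f : ℝ → ℂ) (hx : x ≠ 0) :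
    halfLineSemigroup α 0 f x = f x := by
  rw [halfLineSemigroup_apply, halfLineMultiplier_zero α hx, one_mul, add_zero]

theorem halfLineSemigroup_add_apply (α : ℂ) (f : ℝ → ℂ) (hxt : x + t ≠ 0) :
    halfLineSemigroup α (t + s) f x = halfLineSemigroup α t (halfLineSemigroup α s f) x := by
  simp only [halfLineSemigroup_apply, ← halfLineMultiplier_mul α hxt, add_assoc]
  ring

theorem norm_halfLineSemigroup_le (hα : 0 ≤ α.re) (ht : 0 ≤ t) (hx : 0 < x) :
    ‖halfLineSemigroup α t f x‖ ≤ ‖f (x + t)‖ := by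
  rw [halfLineSemigroup_apply, norm_mul]
  exact mul_le_of_le_one_left (norm_nonneg _) (norm_halfLineMultiplier_le_one hα ht hx)

theorem MeasureTheory.AEStronglyMeasurable.halfLineSemigroup (α : ℂ)
    (hf : AEStronglyMeasurable f (volume.restrict (Ioi 0))) (ht : 0 ≤ t) :
    AEStronglyMeasurable (halfLineSemigroup α t f) (volume.restrict (Ioi 0)) :=
  (measurable_halfLineMultiplier α t).aestronglyMeasurable.mul
    (hf.comp_add_const_restrict_Ioi ht)

theorem eLpNorm_halfLineSemigroup_le (hα : 0 ≤ α.re) (ht : 0 ≤ t) {p : ℝ≥0∞}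
    (hf : AEStronglyMeasurable f (volume.restrict (Ioi 0))) :
    eLpNorm (halfLineSemigroup α t f) p (volume.restrict (Ioi 0)) ≤
      eLpNorm f p (volume.restrict (Ioi 0)) :=
  (eLpNorm_mono_ae ((ae_restrict_iff' measurableSet_Ioi).2 (.of_forall fun _ hx =>
    norm_halfLineSemigroup_le hα ht hx))).trans (eLpNorm_comp_add_const_restrict_Ioi_le hf ht)

theorem MeasureTheory.MemLp.halfLineSemigroup (hα : 0 ≤ α.re) (ht : 0 ≤ t) {p : ℝ≥0∞}
    (hf : MemLp f p (volume.restrict (Ioi 0))) :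
    MemLp (halfLineSemigroup α t f) p (volume.restrict (Ioi 0)) :=
  ⟨hf.1.halfLineSemigroup α ht, (eLpNorm_halfLineSemigroup_le hα ht hf.1).trans_lt hf.2⟩
theorem halfLineSemigroup_indicator_Ioi_apply (α : ℂ) (f : ℝ → ℂ) (ht : 0 ≤ t) (hx : 0 < x) :
    halfLineSemigroup α t ((Ioi 0).indicator f) x = halfLineSemigroup α t f x := by
  rw [halfLineSemigroup_apply, halfLineSemigroup_apply,
    indicator_of_mem (show x + t ∈ Ioi 0 from add_pos_of_pos_of_nonneg hx ht)]

theorem tendsto_eLpNorm_halfLineMultiplier_sub_mul (hα : 0 ≤ α.re) {t₀ : ℝ} (ht₀ : 0 ≤ t₀)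
    {p : ℝ≥0∞} (hp0 : p ≠ 0) (hp : p ≠ ∞) {g : ℝ → ℂ} (hg : MemLp g p volume) :
    Tendsto (fun t => eLpNorm (fun x => (halfLineMultiplier α t x - halfLineMultiplier α t₀ x) *
      g (x + t₀)) p (volume.restrict (Ioi 0))) (𝓝[Ici 0] t₀) (𝓝 0) := by
  have hg_shift : MemLp (fun x => g (x + t₀)) p volume :=
    hg.comp_measurePreserving (measurePreserving_add_right volume t₀)
  refine tendsto_eLpNorm_of_dominated hp0 hp (bound := fun x => 2 * ‖g (x + t₀)‖)
    (.of_forall fun t => ((measurable_halfLineMultiplier α t).sub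
      (measurable_halfLineMultiplier α t₀)).aestronglyMeasurable.mul hg_shift.1.restrict)
    ?_ ((hg_shift.norm.const_mul 2).restrict _) ?_
  · filter_upwards [self_mem_nhdsWithin] with t (ht : 0 ≤ t)
    refine (ae_restrict_iff' measurableSet_Ioi).2 (.of_forall fun x (hx : 0 < x) => ?_)
    rw [norm_mul]
    gcongr
    calc ‖halfLineMultiplier α t x - halfLineMultiplier α t₀ x‖
        ≤ ‖halfLineMultiplier α t x‖ + ‖halfLineMultiplier α t₀ x‖ := norm_sub_le _ _
      _ ≤ 1 + 1 := add_le_add (norm_halfLineMultiplier_le_one hα ht hx)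
          (norm_halfLineMultiplier_le_one hα ht₀ hx)
      _ = 2 := one_add_one_eq_two
  · refine (ae_restrict_iff' measurableSet_Ioi).2 (.of_forall fun x (hx : 0 < x) => ?_)
    have h := ((continuousAt_halfLineMultiplier_param α (show 0 < x + t₀ by linarith)).tendsto
      |>.sub_const (halfLineMultiplier α t₀ x) |>.mul_const (g (x + t₀)))
    rw [sub_self, zero_mul] at h
    exact h.mono_left nhdsWithin_le_nhds

theorem tendsto_eLpNorm_halfLineSemigroup_sub_of_memLp_volume (hα : 0 ≤ α.re) {t₀ : ℝ}
    (ht₀ : 0 ≤ t₀) {p : ℝ≥0∞} [Fact (1 ≤ p)] (hp : p ≠ ∞) {g : ℝ → ℂ} (hg : MemLp g p volume) :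
    Tendsto (fun t => eLpNorm (fun x => halfLineSemigroup α t g x - halfLineSemigroup α t₀ g x) p
      (volume.restrict (Ioi 0))) (𝓝[Ici 0] t₀) (𝓝 0) := by
  have hp0 : p ≠ 0 := (one_pos.trans_le Fact.out).ne'
  have h_shift (s : ℝ) : AEStronglyMeasurable (fun x => g (x + s)) (volume.restrict (Ioi 0)) :=
    (hg.1.comp_measurePreserving (measurePreserving_add_right volume s)).restrict
  have h_le : ∀ᶠ t in 𝓝[Ici 0] t₀,
      eLpNorm (fun x => halfLineSemigroup α t g x - halfLineSemigroup α t₀ g x) p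
          (volume.restrict (Ioi 0)) ≤
        eLpNorm (fun x => g (x + t) - g (x + t₀)) p volume +
          eLpNorm (fun x => (halfLineMultiplier α t x - halfLineMultiplier α t₀ x) *
            g (x + t₀)) p (volume.restrict (Ioi 0)) := by
    filter_upwards [self_mem_nhdsWithin] with t (ht : 0 ≤ t)
    have h_split : (fun x => halfLineSemigroup α t g x - halfLineSemigroup α t₀ g x) =
        (fun x => halfLineMultiplier α t x * (g (x + t) - g (x + t₀))) +
          fun x => (halfLineMultiplier α t x - halfLineMultiplier α t₀ x) * g (x + t₀) := by
      ext x
      simp only [halfLineSemigroup_apply, Pi.add_apply]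
      ring
    rw [h_split]
    refine (eLpNorm_add_le ((measurable_halfLineMultiplier α t).aestronglyMeasurable.mul
      ((h_shift t).sub (h_shift t₀))) (((measurable_halfLineMultiplier α t).sub
        (measurable_halfLineMultiplier α t₀)).aestronglyMeasurable.mul (h_shift t₀))
          Fact.out).trans (add_le_add_left ?_ _)
    calc eLpNorm (fun x => halfLineMultiplier α t x * (g (x + t) - g (x + t₀))) p
          (volume.restrict (Ioi 0))
        ≤ eLpNorm (fun x => g (x + t) - g (x + t₀)) p (volume.restrict (Ioi 0)) := by
          refine eLpNorm_mono_ae ((ae_restrict_iff' measurableSet_Ioi).2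
            (.of_forall fun x (hx : 0 < x) => ?_))
          rw [norm_mul]
          exact mul_le_of_le_one_left (norm_nonneg _) (norm_halfLineMultiplier_le_one hα ht hx)
      _ ≤ eLpNorm (fun x => g (x + t) - g (x + t₀)) p volume :=
          eLpNorm_mono_measure _ Measure.restrict_le_self
  have h_sum := ((tendsto_eLpNorm_comp_add_right_sub hp hg t₀).mono_left
    nhdsWithin_le_nhds).add (tendsto_eLpNorm_halfLineMultiplier_sub_mul hα ht₀ hp0 hp hg)
  rw [add_zero] at h_sum
  exact tendsto_of_tendsto_of_tendsto_of_le_of_le' tendsto_const_nhds h_sum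
    (.of_forall fun _ => zero_le) h_le

theorem tendsto_eLpNorm_halfLineSemigroup_sub (hα : 0 ≤ α.re) {t₀ : ℝ} (ht₀ : 0 ≤ t₀)
    {p : ℝ≥0∞} [Fact (1 ≤ p)] (hp : p ≠ ∞) (hf : MemLp f p (volume.restrict (Ioi 0))) :
    Tendsto (fun t => eLpNorm (fun x => halfLineSemigroup α t f x - halfLineSemigroup α t₀ f x) p
      (volume.restrict (Ioi 0))) (𝓝[Ici 0] t₀) (𝓝 0) := by
  refine (tendsto_eLpNorm_halfLineSemigroup_sub_of_memLp_volume hα ht₀ hp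
    ((memLp_indicator_iff_restrict measurableSet_Ioi).2 hf)).congr' ?_
  filter_upwards [self_mem_nhdsWithin] with t (ht : 0 ≤ t)
  refine eLpNorm_congr_ae ((ae_restrict_iff' measurableSet_Ioi).2 (.of_forall fun x hx => ?_))
  simp only [halfLineSemigroup_indicator_Ioi_apply α f ht hx,
    halfLineSemigroup_indicator_Ioi_apply α f ht₀ hx]

end HalfLine

/-- For `Re α ≥ 0`, the family `U_t` is a strongly continuous semigroup of contractions
on `L²((0,∞))`: each `U_t` is a linear contraction, `U_t U_s = U_{t+s}`, `U_0 = 1`, and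
`t ↦ U_t f` is continuous from `[0,∞)` to `L²`. -/
theorem halfLineSemigroup_contraction_semigroup (α : ℂ) (hα : 0 ≤ α.re) :
    (∀ t : ℝ, 0 ≤ t → ∀ f : ℝ → ℂ,
      MemLp f 2 (volume.restrict (Set.Ioi 0)) →
        MemLp (halfLineSemigroup α t f) 2 (volume.restrict (Set.Ioi 0)) ∧
          eLpNorm (halfLineSemigroup α t f) 2 (volume.restrict (Set.Ioi 0)) ≤
            eLpNorm f 2 (volume.restrict (Set.Ioi 0))) ∧
    (∀ t : ℝ, ∀ c : ℂ, ∀ f g : ℝ → ℂ, ∀ x : ℝ,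
      halfLineSemigroup α t (fun y => c * f y + g y) x =
        c * halfLineSemigroup α t f x + halfLineSemigroup α t g x) ∧
    (∀ s t : ℝ, 0 ≤ s → 0 ≤ t → ∀ f : ℝ → ℂ, ∀ x ∈ Set.Ioi (0 : ℝ),
      halfLineSemigroup α t (halfLineSemigroup α s f) x = halfLineSemigroup α (t + s) f x) ∧
    (∀ f : ℝ → ℂ, ∀ x ∈ Set.Ioi (0 : ℝ), halfLineSemigroup α 0 f x = f x) ∧
    (∀ f : ℝ → ℂ, MemLp f 2 (volume.restrict (Set.Ioi 0)) → ∀ t₀ : ℝ, 0 ≤ t₀ →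
      Filter.Tendsto
        (fun t => eLpNorm (fun x => halfLineSemigroup α t f x - halfLineSemigroup α t₀ f x) 2
          (volume.restrict (Set.Ioi 0)))
        (nhdsWithin t₀ (Set.Ici 0)) (nhds 0)) :=
  ⟨fun _ ht _ hf => ⟨hf.halfLineSemigroup hα ht, eLpNorm_halfLineSemigroup_le hα ht hf.1⟩,
    halfLineSemigroup_const_mul_add α,
    fun _ _ _ ht f _ hx =>
      (halfLineSemigroup_add_apply α f (add_pos_of_pos_of_nonneg hx ht).ne').symm,
    fun f _ hx => halfLineSemigroup_zero_apply α f hx.ne',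
    fun _ hf _ ht₀ => tendsto_eLpNorm_halfLineSemigroup_sub hα ht₀ ENNReal.ofNat_ne_top hf⟩
end

section
/- Let a, c ∈ ℂ and b, z, w ∈ ℂ with Re b > 0 and |w| < Re z. Define the regularized confluent series ₁𝐅₁(a;c;u) = Σ_{n=0}^∞ (a)_n uⁿ / (Γ(c+n) n!) (an entire function of u) and the regularized hypergeometric series ₂𝐅₁(a,b;c;u) = Σ_{n=0}^∞ (a)_n (b)_n uⁿ / (Γ(c+n) n!) for |u| < 1, where (a)_n = a(a+1)⋯(a+n−1) is the ascending factorial (Pochhammer symbol). Then the function x ↦ x^{b−1} e^{−zx} ₁𝐅₁(a;c;wx) is integrable on (0,∞), |w/z| < 1, and ∫₀^∞ x^{b−1} e^{−zx} ₁𝐅₁(a;c;wx) dx = z^{−b} Γ(b) ₂𝐅₁(a, b; c; w/z), with z^{−b} the principal branch. -/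
/-!
Expanding `₁𝐅₁(a;c;wx) = Σ Cₙ wⁿ xⁿ` and integrating termwise, the `n`-th term is an Euler integral
`∫₀^∞ x^{b+n-1} e^{-zx} dx = z^{-b-n} Γ(b+n) = z^{-b} Γ(b) (b)ₙ z^{-n}`, which produces the `₂𝐅₁`
series at `w / z`. The interchange is justified by the summability of the integrals of the absolute
values, `Σ ‖Cₙ‖ ‖w‖ⁿ Γ(Re b + n) (Re z)^{-Re b-n}`: up to a constant factor these are the absolute
terms of the series of `₂𝐅₁(a, Re b; c)` at `‖w‖ / Re z < 1`, inside its disc of convergence.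
The Euler integral for complex `z` follows from the case `z > 0` by analytic continuation in `z`.
-/

open MeasureTheory

/-- The Pochhammer symbol (ascending factorial) `(a)_n = a(a+1)⋯(a+n−1)`. -/
noncomputable def poch (a : ℂ) (n : ℕ) : ℂ := ∏ k ∈ Finset.range n, (a + k)

/-- The regularized confluent hypergeometric function
`₁𝐅₁(a;c;u) = Σ (a)_n uⁿ / (Γ(c+n) n!)`. -/
noncomputable def regConfluent (a c u : ℂ) : ℂ :=
  ∑' n : ℕ, poch a n * u ^ n / (Complex.Gamma (c + n) * (n.factorial : ℂ))

/-- The regularized Gauss hypergeometric function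
`₂𝐅₁(a,b;c;u) = Σ (a)_n (b)_n uⁿ / (Γ(c+n) n!)`. -/
noncomputable def regHypergeom (a b c u : ℂ) : ℂ :=
  ∑' n : ℕ, poch a n * poch b n * u ^ n / (Complex.Gamma (c + n) * (n.factorial : ℂ))

open Set Filter Topology

theorem MeasureTheory.integrable_tsum_of_summable_integral_norm {α E ι : Type*}
    [MeasurableSpace α] {μ : Measure α} [NormedAddCommGroup E] [CompleteSpace E] [Countable ι]
    {F : ι → α → E} (hF_int : ∀ i, Integrable (F i) μ)
    (hF_sum : Summable fun i ↦ ∫ a, ‖F i a‖ ∂μ) :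
    Integrable (fun a ↦ ∑' i, F i a) μ := by
  have hmeas i : AEMeasurable (fun a ↦ ‖F i a‖ₑ) μ := (hF_int i).aestronglyMeasurable.enorm
  have hlint : ∑' i, ∫⁻ a, ‖F i a‖ₑ ∂μ ≠ ⊤ := by
    simp_rw [← ofReal_integral_norm_eq_lintegral_enorm (hF_int _)]
    rw [← ENNReal.ofReal_tsum_of_nonneg (fun i ↦ integral_nonneg fun a ↦ norm_nonneg _) hF_sum]
    exact ENNReal.ofReal_ne_top
  have hsum : ∀ᵐ a ∂μ, Summable fun i ↦ ‖F i a‖ :=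
    summable_norm_of_tsum_eLpNorm_ne_top le_rfl (fun i ↦ (hF_int i).aestronglyMeasurable)
      (by simpa [eLpNorm_one_eq_lintegral_enorm] using hlint)
  refine ⟨aestronglyMeasurable_of_tendsto_ae atTop
    (fun s ↦ Finset.aestronglyMeasurable_fun_sum s fun i _ ↦ (hF_int i).aestronglyMeasurable)
    (hsum.mono fun a ha ↦ ha.of_norm.hasSum), ?_⟩
  calc ∫⁻ a, ‖∑' i, F i a‖ₑ ∂μ ≤ ∫⁻ a, ∑' i, ‖F i a‖ₑ ∂μ :=
        lintegral_mono fun a ↦ enorm_tsum_le_tsum_enorm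
    _ = ∑' i, ∫⁻ a, ‖F i a‖ₑ ∂μ := lintegral_tsum hmeas
    _ < ⊤ := hlint.lt_top

lemma integrableOn_rpow_mul_exp_neg_mul {p b : ℝ} (hp : -1 < p) (hb : 0 < b) :
    IntegrableOn (fun t : ℝ ↦ t ^ p * Real.exp (-(b * t))) (Ioi 0) :=
  (integrableOn_rpow_mul_exp_neg_mul_rpow hp one_pos hb).congr_fun
    (fun t _ ↦ by simp only [Real.rpow_one, neg_mul]) measurableSet_Ioi

lemma poch_eq_ascPochhammer_eval (a : ℂ) (n : ℕ) : poch a n = (ascPochhammer ℂ n).eval a := by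
  induction n with
  | zero => simp [poch]
  | succ n ih => rw [poch, Finset.prod_range_succ, ← poch, ih, ascPochhammer_succ_eval]

namespace Complex

lemma Gamma_add_nat_eq_poch_mul {b : ℂ} (hb : ∀ k : ℕ, b ≠ -k) (n : ℕ) :
    Gamma (b + n) = poch b n * Gamma b := by
  rw [poch_eq_ascPochhammer_eval, ← Gamma_add_nat_div_Gamma_eq b hb,
    div_mul_cancel₀ _ (Gamma_ne_zero hb)]

lemma ne_neg_natCast_of_re_pos {b : ℂ} (hb : 0 < b.re) (k : ℕ) : b ≠ -k := by
  rintro rfl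
  simp only [neg_re, natCast_re, Left.neg_pos_iff] at hb
  exact (Nat.cast_nonneg k).not_gt hb

lemma one_div_cpow_add_natCast {z : ℂ} (hz : z ∈ slitPlane) (s : ℂ) (n : ℕ) :
    (1 / z) ^ (s + n) = z ^ (-s) * (1 / z) ^ n := by
  rw [cpow_add _ _ (one_div_ne_zero (slitPlane_ne_zero hz)), cpow_natCast, one_div,
    inv_cpow _ _ (slitPlane_arg_ne_pi hz), ← cpow_neg]

lemma norm_ofReal_cpow_mul_exp_neg_mul {t : ℝ} (ht : 0 < t) (s z : ℂ) :
    ‖(t : ℂ) ^ s * exp (-(z * t))‖ = t ^ s.re * Real.exp (-(z.re * t)) := by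
  rw [norm_mul, norm_cpow_eq_rpow_re_of_pos ht, norm_exp, neg_re, re_mul_ofReal]

lemma aestronglyMeasurable_ofReal_cpow_mul_exp_neg_mul (s z : ℂ) :
    AEStronglyMeasurable (fun t : ℝ ↦ (t : ℂ) ^ s * exp (-(z * t))) (volume.restrict (Ioi 0)) :=
  (ContinuousOn.mul (fun t ht ↦ (continuousAt_ofReal_cpow_const _ _
    (Or.inr (ne_of_gt ht))).continuousWithinAt) (by fun_prop)).aestronglyMeasurable
    measurableSet_Ioi

lemma integrableOn_ofReal_cpow_mul_exp_neg_mul {s z : ℂ} (hs : 0 < s.re) (hz : 0 < z.re) :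
    IntegrableOn (fun t : ℝ ↦ (t : ℂ) ^ (s - 1) * exp (-(z * t))) (Ioi 0) := by
  refine (integrableOn_rpow_mul_exp_neg_mul (p := s.re - 1) (by linarith) hz).mono'
    (aestronglyMeasurable_ofReal_cpow_mul_exp_neg_mul _ _) ?_
  filter_upwards [ae_restrict_mem measurableSet_Ioi] with t ht
  rw [norm_ofReal_cpow_mul_exp_neg_mul ht, sub_re, one_re]

lemma hasDerivAt_integral_ofReal_cpow_mul_exp_neg_mul {s z : ℂ} (hs : 0 < s.re) (hz : 0 < z.re) :
    HasDerivAt (fun z ↦ ∫ t in Ioi (0 : ℝ), (t : ℂ) ^ (s - 1) * exp (-(z * t)))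
      (∫ t in Ioi (0 : ℝ), -((t : ℂ) ^ s * exp (-(z * t)))) z := by
  have hε : 0 < z.re / 2 := half_pos hz
  refine (hasDerivAt_integral_of_dominated_loc_of_deriv_le
    (F := fun y t ↦ (t : ℂ) ^ (s - 1) * exp (-(y * t)))
    (F' := fun y t ↦ -((t : ℂ) ^ s * exp (-(y * t))))
    (bound := fun t ↦ t ^ s.re * Real.exp (-(z.re / 2 * t))) (Metric.ball_mem_nhds z hε)
    (Eventually.of_forall fun _ ↦ aestronglyMeasurable_ofReal_cpow_mul_exp_neg_mul _ _)
    (integrableOn_ofReal_cpow_mul_exp_neg_mul hs hz)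
    (aestronglyMeasurable_ofReal_cpow_mul_exp_neg_mul s z).neg ?_
    (integrableOn_rpow_mul_exp_neg_mul (by linarith) hε) ?_).2
  · filter_upwards [ae_restrict_mem measurableSet_Ioi] with t (ht : 0 < t) y hy
    have hy' : z.re / 2 ≤ y.re := by
      have := (abs_re_le_norm (y - z)).trans_lt (mem_ball_iff_norm.mp hy)
      rw [sub_re] at this
      linarith [(abs_lt.mp this).1]
    rw [norm_neg, norm_ofReal_cpow_mul_exp_neg_mul ht]
    gcongr
  · filter_upwards [ae_restrict_mem measurableSet_Ioi] with t (ht : 0 < t) y _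
    have ht0 : (t : ℂ) ≠ 0 := ofReal_ne_zero.mpr ht.ne'
    refine (((hasDerivAt_mul_const (t : ℂ)).fun_neg.cexp).const_mul
      ((t : ℂ) ^ (s - 1))).congr_deriv ?_
    rw [cpow_sub _ _ ht0, cpow_one]
    field_simp

theorem integral_ofReal_cpow_mul_exp_neg_mul_Ioi {s z : ℂ} (hs : 0 < s.re) (hz : 0 < z.re) :
    ∫ t in Ioi (0 : ℝ), (t : ℂ) ^ (s - 1) * exp (-(z * t)) = (1 / z) ^ s * Gamma s := by
  set U : Set ℂ := {z | 0 < z.re}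
  have hU : IsOpen U := isOpen_lt continuous_const continuous_re
  have hLHS : AnalyticOnNhd ℂ (fun z ↦ ∫ t in Ioi (0 : ℝ), (t : ℂ) ^ (s - 1) * exp (-(z * t))) U :=
    DifferentiableOn.analyticOnNhd (fun z hz ↦ (hasDerivAt_integral_ofReal_cpow_mul_exp_neg_mul hs
      hz).differentiableAt.differentiableWithinAt) hU
  have hRHS : AnalyticOnNhd ℂ (fun z ↦ (1 / z) ^ s * Gamma s) U := by
    refine DifferentiableOn.analyticOnNhd (fun z (hz : 0 < z.re) ↦ ?_) hU
    have hz0 : z ≠ 0 := fun h ↦ by simp [h] at hz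
    refine (((differentiableAt_const _).div differentiableAt_id hz0).cpow
      (differentiableAt_const s) ?_).mul_const _ |>.differentiableWithinAt
    change 0 < (1 / z).re ∨ _
    rw [one_div, inv_re]
    exact Or.inl (div_pos hz (normSq_pos.mpr hz0))
  have hreal : ∃ᶠ y in 𝓝[≠] (1 : ℂ), (∫ t in Ioi (0 : ℝ), (t : ℂ) ^ (s - 1) * exp (-(y * t))) =
      (1 / y) ^ s * Gamma s := by
    have hofReal : Tendsto ((↑) : ℝ → ℂ) (𝓝[≠] 1) (𝓝[≠] 1) :=
      continuous_ofReal.continuousWithinAt.tendsto_nhdsWithin fun x hx ↦ by simpa using hx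
    refine hofReal.frequently (Eventually.frequently ?_)
    filter_upwards [eventually_nhdsWithin_of_eventually_nhds (lt_mem_nhds one_pos)] with r hr
    exact_mod_cast integral_cpow_mul_exp_neg_mul_Ioi hs hr
  exact hLHS.eqOn_of_preconnected_of_frequently_eq hRHS (convex_halfSpace_re_gt 0).isPreconnected
    (show (1 : ℂ) ∈ U by simp [U]) hreal hz

theorem integrableOn_and_integral_ofReal_cpow_mul_exp_neg_mul_tsum_Ioi {b z : ℂ} (q : ℕ → ℂ)
    (hb : 0 < b.re) (hz : 0 < z.re)
    (hq : Summable fun n : ℕ ↦ ‖q n‖ * ((1 / z.re) ^ (b.re + n) * Real.Gamma (b.re + n))) :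
    IntegrableOn (fun x : ℝ ↦ (x : ℂ) ^ (b - 1) * exp (-(z * x)) * ∑' n, q n * (x : ℂ) ^ n)
        (Ioi 0) ∧
      ∫ x in Ioi (0 : ℝ), (x : ℂ) ^ (b - 1) * exp (-(z * x)) * ∑' n, q n * (x : ℂ) ^ n =
        ∑' n, q n * ((1 / z) ^ (b + n) * Gamma (b + n)) := by
  set F : ℕ → ℝ → ℂ := fun n x ↦ q n * ((x : ℂ) ^ (b + n - 1) * exp (-(z * x)))
  have hbn (n : ℕ) : 0 < (b + n).re := by rw [add_re, natCast_re]; positivity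
  have hF_int (n : ℕ) : IntegrableOn (F n) (Ioi 0) :=
    (integrableOn_ofReal_cpow_mul_exp_neg_mul (hbn n) hz).const_mul (q n)
  have hF_norm (n : ℕ) : ∫ x in Ioi (0 : ℝ), ‖F n x‖ =
      ‖q n‖ * ((1 / z.re) ^ (b.re + n) * Real.Gamma (b.re + n)) := by
    rw [← Real.integral_rpow_mul_exp_neg_mul_Ioi (by simpa using hbn n) hz, ← integral_const_mul]
    refine setIntegral_congr_fun measurableSet_Ioi fun x (hx : 0 < x) ↦ ?_
    rw [norm_mul, norm_ofReal_cpow_mul_exp_neg_mul hx, sub_re, add_re, natCast_re, one_re]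
  have hF_sum : Summable fun n ↦ ∫ x in Ioi (0 : ℝ), ‖F n x‖ := by simpa only [hF_norm] using hq
  have hpointwise : EqOn (fun x : ℝ ↦ (x : ℂ) ^ (b - 1) * exp (-(z * x)) * ∑' n, q n * (x : ℂ) ^ n)
      (fun x ↦ ∑' n, F n x) (Ioi 0) := fun x (hx : 0 < x) ↦ by
    have hx0 : (x : ℂ) ≠ 0 := ofReal_ne_zero.mpr hx.ne'
    simp only [F, ← tsum_mul_left, add_sub_right_comm b, cpow_add _ _ hx0, cpow_natCast]
    exact tsum_congr fun n ↦ by ring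
  have hint : IntegrableOn (fun x ↦ ∑' n, F n x) (Ioi 0) :=
    integrable_tsum_of_summable_integral_norm hF_int hF_sum
  refine ⟨hint.congr_fun hpointwise.symm measurableSet_Ioi, ?_⟩
  rw [setIntegral_congr_fun measurableSet_Ioi hpointwise,
    ← integral_tsum_of_summable_integral_norm hF_int hF_sum]
  exact tsum_congr fun n ↦ by
    rw [integral_const_mul, integral_ofReal_cpow_mul_exp_neg_mul_Ioi (hbn n) hz]

lemma regularizedHGFunCoeff_singleton (a c : ℂ) (n : ℕ) :
    regularizedHGFunCoeff {a} {c} n = poch a n / (Gamma (c + n) * n.factorial) := by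
  simp [regularizedHGFunCoeff, poch_eq_ascPochhammer_eval, mul_comm]

lemma summable_norm_regularizedHGFunCoeff_mul_Gamma (a c w : ℂ) {β σ : ℝ} (hβ : 0 < β)
    (hw : ‖w‖ < σ) :
    Summable fun n : ℕ ↦
      ‖regularizedHGFunCoeff {a} {c} n * w ^ n‖ * ((1 / σ) ^ (β + n) * Real.Gamma (β + n)) := by
  have hσ : 0 < σ := (norm_nonneg w).trans_lt hw
  set r : NNReal := ⟨‖w‖ / σ, by positivity⟩
  have hr : (r : ENNReal) < (regularizedGaussHGFunSeries a β c).radius := by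
    refine lt_of_lt_of_le ?_ (radius_regularizedGaussHGFunSeries_ge_one a β c)
    exact_mod_cast (div_lt_one hσ).mpr hw
  have hGamma (n : ℕ) : Real.Gamma (β + n) = ‖poch (β : ℂ) n‖ * Real.Gamma β := by
    have := Gamma_add_nat_eq_poch_mul (ne_neg_natCast_of_re_pos (b := β) (by simpa)) n
    rw [← ofReal_natCast, ← ofReal_add, Gamma_ofReal, Gamma_ofReal] at this
    rw [← Real.norm_of_nonneg (Real.Gamma_pos_of_pos (by positivity)).le, ← norm_real, this,
      norm_mul, norm_real, Real.norm_of_nonneg (Real.Gamma_pos_of_pos hβ).le]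
  refine ((regularizedGaussHGFunSeries a β c).summable_norm_mul_pow hr |>.mul_left
    ((1 / σ) ^ β * Real.Gamma β)).congr fun n ↦ ?_
  rw [FormalMultilinearSeries.norm_apply_eq_norm_coef, coeff_regularizedGaussHGFunSeries,
    regularizedHGFunCoeff_singleton, hGamma, ← poch_eq_ascPochhammer_eval,
    ← poch_eq_ascPochhammer_eval, Real.rpow_add (by positivity), Real.rpow_natCast,
    show (r : ℝ) = ‖w‖ / σ from rfl]
  simp only [norm_mul, norm_div, norm_pow, div_pow]
  ring

end Complex

lemma regConfluent_mul_eq_tsum (a c w u : ℂ) :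
    regConfluent a c (w * u) = ∑' n, Complex.regularizedHGFunCoeff {a} {c} n * w ^ n * u ^ n :=
  tsum_congr fun n ↦ by rw [Complex.regularizedHGFunCoeff_singleton, mul_pow]; ring

/-- Laplace-type integral transform of the confluent function into the Gauss
hypergeometric function: for `Re b > 0` and `|w| < Re z`,
`∫₀^∞ x^{b−1} e^{−zx} ₁𝐅₁(a;c;wx) dx = z^{−b} Γ(b) ₂𝐅₁(a,b;c;w/z)`. -/
theorem confluent_laplace_transform (a c b z w : ℂ)
    (hb : 0 < b.re) (hw : ‖w‖ < z.re) :
    IntegrableOn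
        (fun x : ℝ => (x : ℂ) ^ (b - 1) * Complex.exp (-(z * x)) * regConfluent a c (w * x))
        (Set.Ioi 0) ∧
      ‖w / z‖ < 1 ∧
      (∫ x in Set.Ioi (0 : ℝ),
          (x : ℂ) ^ (b - 1) * Complex.exp (-(z * x)) * regConfluent a c (w * x)) =
        z ^ (-b) * Complex.Gamma b * regHypergeom a b c (w / z) := by
  have hz : 0 < z.re := (norm_nonneg w).trans_lt hw
  have hz0 : z ≠ 0 := fun h ↦ by simp [h] at hz
  obtain ⟨hint, hval⟩ := Complex.integrableOn_and_integral_ofReal_cpow_mul_exp_neg_mul_tsum_Ioi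
    (fun n ↦ Complex.regularizedHGFunCoeff {a} {c} n * w ^ n) hb hz
    (Complex.summable_norm_regularizedHGFunCoeff_mul_Gamma a c w hb hw)
  simp only [← regConfluent_mul_eq_tsum] at hint hval
  refine ⟨hint, ?_, ?_⟩
  · rw [norm_div]
    exact (div_lt_one (norm_pos_iff.mpr hz0)).mpr (hw.trans_le (Complex.re_le_norm z))
  · rw [hval, regHypergeom, ← tsum_mul_left]
    refine tsum_congr fun n ↦ ?_
    rw [Complex.regularizedHGFunCoeff_singleton, Complex.one_div_cpow_add_natCast (Or.inl hz),
      Complex.Gamma_add_nat_eq_poch_mul (Complex.ne_neg_natCast_of_re_pos hb), div_pow,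
      div_pow]
    ring
end

section
/- Let α, k ∈ ℂ with Re α > −1/2 and Im k > 0. Then the linear span of the functions x ↦ x^{α+n} e^{ikx} for n ∈ ℕ is dense in L²((0,∞)), where x^{α+n} = exp((α+n) log x) for x > 0. -/
/-!
If `f ∈ L²(0,∞)` is orthogonal to every `x^(α+n) e^(ikx)`, then `h(x) = x^ᾱ e^(-i k̄ x) f(x)` has
vanishing moments `∫ xⁿ h`. Since `Im k > 0` and `Re α > -1/2`, Cauchy–Schwarz shows that the
Laplace transform `∫ e^(-zx) h(x) dx` converges absolutely on the half-plane `Re z > -Im k`, where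
it is holomorphic. Expanding `e^(-zx)` in its power series, it vanishes near `0`, hence on the
whole half-plane. On the imaginary axis it is the Fourier transform of `h` extended by zero, so
`h = 0` by Fourier uniqueness, and then `f = 0`.
-/

open MeasureTheory Set Filter
open scoped Real Topology Nat FourierTransform ComplexConjugate SchwartzMap Complex

theorem MeasureTheory.Integrable.ae_eq_zero_of_fourier_eq_zero {V : Type*}
    [NormedAddCommGroup V] [InnerProductSpace ℝ V] [FiniteDimensional ℝ V] [MeasurableSpace V]
    [BorelSpace V] {f : V → ℂ} (hf : Integrable f) (h𝓕 : 𝓕 f = 0) : f =ᵐ[volume] 0 := by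
  refine ae_eq_zero_of_integral_contDiff_smul_eq_zero hf.locallyIntegrable fun g hg hgc => ?_
  let G : 𝓢(V, ℂ) :=
    (hgc.comp_left Complex.ofReal_zero).toSchwartzMap (Complex.ofRealCLM.contDiff.comp hg)
  have hflip : (innerₗ V).flip = innerₗ V := by
    ext x y
    exact real_inner_comm x y
  have hselfAdjoint := VectorFourier.integral_fourierIntegral_smul_eq_flip (L := innerₗ V)
    Real.continuous_fourierChar continuous_inner hf ((𝓕⁻ G).integrable (μ := volume))
  rw [hflip] at hselfAdjoint
  calc ∫ x, g x • f x = ∫ x, f x • 𝓕 (𝓕⁻ G) x := by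
        simp only [FourierTransform.fourier_fourierInv_eq G, Complex.real_smul, mul_comm]
        rfl
    _ = ∫ ξ, 𝓕 f ξ • 𝓕⁻ G ξ := by
        rw [SchwartzMap.fourier_coe]
        exact hselfAdjoint.symm
    _ = 0 := by simp [h𝓕]

lemma pow_mul_exp_neg_mul_le {δ x : ℝ} (hδ : 0 < δ) (hx : 0 ≤ x) (n : ℕ) :
    x ^ n * Real.exp (-(δ * x)) ≤ n ! / δ ^ n := by
  have := Real.pow_div_factorial_le_exp _ (mul_nonneg hδ.le hx) n
  rw [Real.exp_neg, ← div_eq_mul_inv, div_le_div_iff₀ (Real.exp_pos _) (by positivity)]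
  rw [div_le_iff₀ (by positivity), mul_pow] at this
  linarith

lemma norm_cexp_neg_mul_ofReal (z : ℂ) (x : ℝ) : ‖cexp (-z * x)‖ = Real.exp (-z.re * x) := by
  simp [Complex.norm_exp, neg_mul]

noncomputable def laplaceTransform (h : ℝ → ℂ) (z : ℂ) : ℂ :=
  ∫ x : ℝ in Ioi 0, cexp (-z * x) * h x

def IsLaplaceIntegrable (h : ℝ → ℂ) (b : ℝ) : Prop :=
  ∀ z : ℂ, -b < z.re → IntegrableOn (fun x : ℝ => cexp (-z * x) * h x) (Ioi 0)

namespace IsLaplaceIntegrable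

variable {h : ℝ → ℂ} {b : ℝ}

lemma aestronglyMeasurable (hh : IsLaplaceIntegrable h b) (hb : 0 < b) :
    AEStronglyMeasurable h (volume.restrict (Ioi 0)) := by
  simpa using (hh 0 (by simpa using hb)).aestronglyMeasurable

/-- The factor `xⁿ` only costs a shift of the abscissa, since `xⁿ e^(-δx)` is bounded. -/
lemma integrableOn_pow_mul (hh : IsLaplaceIntegrable h b) (n : ℕ) {z : ℂ} (hz : -b < z.re) :
    IntegrableOn (fun x : ℝ => (x : ℂ) ^ n * cexp (-z * x) * h x) (Ioi 0) := by
  set δ := (z.re + b) / 2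
  have hδ : 0 < δ := by simp only [δ]; linarith
  have hshift := hh (z - δ) (by simp only [Complex.sub_re, Complex.ofReal_re, δ]; linarith)
  have hbdd : ∀ᵐ x : ℝ ∂volume.restrict (Ioi 0),
      ‖(x : ℂ) ^ n * cexp (-(δ : ℂ) * x)‖ ≤ n ! / δ ^ n := by
    filter_upwards [ae_restrict_mem measurableSet_Ioi] with x (hx : 0 < x)
    rw [norm_mul, norm_cexp_neg_mul_ofReal, norm_pow, Complex.norm_real,
      Real.norm_of_nonneg hx.le]
    simpa using pow_mul_exp_neg_mul_le hδ hx.le n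
  refine IntegrableOn.congr_fun (hshift.bdd_mul (by fun_prop) hbdd) (fun x _ => ?_)
    measurableSet_Ioi
  rw [mul_assoc, ← mul_assoc (cexp _), ← Complex.exp_add]
  ring_nf

lemma differentiableOn_laplaceTransform (hh : IsLaplaceIntegrable h b) :
    DifferentiableOn ℂ (laplaceTransform h) {z | -b < z.re} := by
  intro z₀ (hz₀ : -b < z₀.re)
  obtain ⟨a, ha, haz₀⟩ := exists_between hz₀
  have hs : {z : ℂ | a < z.re} ∈ 𝓝 z₀ :=
    (isOpen_lt continuous_const Complex.continuous_re).mem_nhds haz₀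
  have hderiv := hasDerivAt_integral_of_dominated_loc_of_deriv_le
    (F := fun (z : ℂ) (x : ℝ) => cexp (-z * x) * h x)
    (F' := fun (z : ℂ) (x : ℝ) => -((x : ℂ) ^ 1 * cexp (-z * x) * h x))
    (bound := fun x : ℝ => ‖(x : ℂ) ^ 1 * cexp (-(a : ℂ) * x) * h x‖) hs
    (eventually_of_mem hs fun z (hz : a < z.re) => (hh z (by linarith)).aestronglyMeasurable)
    (hh z₀ hz₀) (hh.integrableOn_pow_mul 1 hz₀).aestronglyMeasurable.neg ?_
    (hh.integrableOn_pow_mul 1 (z := a) (by simpa using ha)).norm ?_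
  · exact hderiv.2.differentiableAt.differentiableWithinAt
  · filter_upwards [ae_restrict_mem measurableSet_Ioi] with x (hx : 0 < x) z (hz : a < z.re)
    simp only [norm_neg, norm_mul, norm_cexp_neg_mul_ofReal, Complex.ofReal_re]
    gcongr
  · filter_upwards with x z _
    have hlin : HasDerivAt (fun z : ℂ => -z * x) (-x) z := by
      simpa using (hasDerivAt_neg z).mul_const (x : ℂ)
    exact (hlin.cexp.mul_const (h x)).congr_deriv (by ring)

lemma hasSum_laplaceTransform (hh : IsLaplaceIntegrable h b) {z : ℂ} (hz : ‖z‖ < b) :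
    HasSum (fun n : ℕ => (-z) ^ n / n ! * ∫ x : ℝ in Ioi 0, (x : ℂ) ^ n * h x)
      (laplaceTransform h z) := by
  have hmeas := hh.aestronglyMeasurable ((norm_nonneg z).trans_lt hz)
  have hsum (x : ℝ) : HasSum (fun n : ℕ => ‖(-z * x) ^ n / n ! * h x‖)
      (Real.exp ‖-z * x‖ * ‖h x‖) := by
    simpa [Real.exp_eq_exp_ℝ] using
      (NormedSpace.expSeries_div_hasSum_exp ‖-z * x‖).mul_right ‖h x‖
  have hdom := hasSum_integral_of_dominated_convergence (μ := volume.restrict (Ioi 0))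
    (F := fun (n : ℕ) (x : ℝ) => (-z * x) ^ n / n ! * h x)
    (f := fun x : ℝ => cexp (-z * x) * h x)
    (fun n x => ‖(-z * x) ^ n / n ! * h x‖) (fun n => by fun_prop)
    (fun n => ae_of_all _ fun _ => le_rfl) (ae_of_all _ fun x => (hsum x).summable) ?_
    (ae_of_all _ fun x => by
      simpa [Complex.exp_eq_exp_ℂ] using
        (NormedSpace.expSeries_div_hasSum_exp (-z * x)).mul_right (h x))
  · have hterm (n : ℕ) : ∫ x : ℝ in Ioi 0, (-z * x) ^ n / n ! * h x =
        (-z) ^ n / n ! * ∫ x : ℝ in Ioi 0, (x : ℂ) ^ n * h x := by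
      rw [← integral_const_mul]
      congr 1 with x
      ring
    simp only [hterm] at hdom
    exact hdom
  · refine IntegrableOn.congr_fun (hh (-‖z‖) (by simpa using hz)).norm
      (fun x (hx : 0 < x) => ?_) measurableSet_Ioi
    rw [(hsum x).tsum_eq, norm_mul, norm_cexp_neg_mul_ofReal, norm_mul, norm_neg,
      Complex.norm_real, Real.norm_of_nonneg hx.le]
    simp

lemma laplaceTransform_eqOn_zero (hh : IsLaplaceIntegrable h b) (hb : 0 < b)
    (hmom : ∀ n : ℕ, ∫ x : ℝ in Ioi 0, (x : ℂ) ^ n * h x = 0) :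
    EqOn (laplaceTransform h) 0 {z | -b < z.re} := by
  have hopen : IsOpen {z : ℂ | -b < z.re} := isOpen_lt continuous_const Complex.continuous_re
  refine (hh.differentiableOn_laplaceTransform.analyticOnNhd hopen
    ).eqOn_zero_of_preconnected_of_eventuallyEq_zero (z₀ := 0)
    (convex_halfSpace_re_gt (-b)).isPreconnected (by simpa using hb) ?_
  filter_upwards [Metric.ball_mem_nhds 0 hb] with z hz
  have hseries := hh.hasSum_laplaceTransform (by simpa using hz)
  simp only [hmom, mul_zero] at hseries
  exact hseries.unique hasSum_zero

theorem ae_eq_zero_of_moments_eq_zero (hh : IsLaplaceIntegrable h b) (hb : 0 < b)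
    (hmom : ∀ n : ℕ, ∫ x : ℝ in Ioi 0, (x : ℂ) ^ n * h x = 0) :
    h =ᵐ[volume.restrict (Ioi 0)] 0 := by
  set H := (Ioi (0 : ℝ)).indicator h
  have hH : Integrable H := by
    rw [integrable_indicator_iff measurableSet_Ioi]
    simpa using hh (0 : ℂ) (by simpa using hb)
  have h𝓕 : 𝓕 H = 0 := by
    funext w
    calc 𝓕 H w = laplaceTransform h (2 * π * w * Complex.I) := by
          rw [Real.fourier_real_eq_integral_exp_smul, laplaceTransform,
            ← integral_indicator measurableSet_Ioi]
          congr with v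
          by_cases hv : v ∈ Ioi 0
          · simp only [H, indicator_of_mem hv, smul_eq_mul]
            push_cast
            ring_nf
          · simp [H, hv]
      _ = 0 := hh.laplaceTransform_eqOn_zero hb hmom (by simpa using hb)
  filter_upwards [ae_restrict_mem measurableSet_Ioi,
    ae_restrict_of_ae (hH.ae_eq_zero_of_fourier_eq_zero h𝓕)] with x hx hHx
  simpa [H, indicator_of_mem hx] using hHx

end IsLaplaceIntegrable

lemma Complex.conj_ofReal_cpow {x : ℝ} (hx : 0 ≤ x) (w : ℂ) :
    conj ((x : ℂ) ^ w) = (x : ℂ) ^ conj w := by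
  rw [cpow_conj _ _ (by simp [arg_ofReal_of_nonneg hx, Real.pi_ne_zero.symm]), conj_ofReal]

lemma memLp_two_cpow_mul_cexp {w z : ℂ} (hw : -(1 / 2 : ℝ) < w.re) (hz : 0 < z.re) :
    MemLp (fun x : ℝ => (x : ℂ) ^ w * cexp (-z * x)) 2 (volume.restrict (Ioi 0)) := by
  have hmeas : AEStronglyMeasurable (fun x : ℝ => (x : ℂ) ^ w * cexp (-z * x))
      (volume.restrict (Ioi 0)) :=
    (ContinuousOn.mul (fun x (hx : 0 < x) => (Complex.continuousAt_ofReal_cpow_const x w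
      (Or.inr hx.ne')).continuousWithinAt) (by fun_prop)).aestronglyMeasurable measurableSet_Ioi
  rw [memLp_two_iff_integrable_sq_norm hmeas]
  refine IntegrableOn.congr_fun (integrableOn_rpow_mul_exp_neg_mul_rpow (s := 2 * w.re) (p := 1)
    (by linarith) one_pos (by linarith : 0 < 2 * z.re)) (fun x (hx : 0 < x) => ?_)
    measurableSet_Ioi
  rw [norm_mul, norm_cexp_neg_mul_ofReal, Complex.norm_cpow_eq_rpow_re_of_pos hx, mul_pow,
    ← Real.rpow_natCast, ← Real.rpow_natCast, ← Real.rpow_mul hx.le, ← Real.exp_mul,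
    Real.rpow_one]
  push_cast
  ring_nf

lemma isLaplaceIntegrable_cpow_mul_cexp_mul {w κ : ℂ} (hw : -(1 / 2 : ℝ) < w.re) {f : ℝ → ℂ}
    (hf : MemLp f 2 (volume.restrict (Ioi 0))) :
    IsLaplaceIntegrable (fun x : ℝ => (x : ℂ) ^ w * cexp (-κ * x) * f x) κ.re := by
  intro z hz
  have hweight := memLp_two_cpow_mul_cexp (z := z + κ) hw (by simp; linarith)
  refine IntegrableOn.congr_fun (hweight.integrable_mul hf) (fun x _ => ?_) measurableSet_Ioi
  simp only [Pi.mul_apply]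
  rw [neg_add, add_mul, Complex.exp_add]
  ring

lemma inner_toLp_eq_integral_pow_mul {w z : ℂ} (n : ℕ)
    (hg : MemLp (fun x : ℝ => (x : ℂ) ^ (w + n) * cexp (-z * x)) 2 (volume.restrict (Ioi 0)))
    (f : Lp ℂ 2 (volume.restrict (Ioi (0 : ℝ)))) :
    inner ℂ (hg.toLp _) f =
      ∫ x : ℝ in Ioi 0, (x : ℂ) ^ n * ((x : ℂ) ^ conj w * cexp (-conj z * x) * f x) := by
  rw [L2.inner_def]
  refine integral_congr_ae ?_
  filter_upwards [hg.coeFn_toLp, ae_restrict_mem measurableSet_Ioi] with x hgx (hx : 0 < x)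
  rw [RCLike.inner_apply, hgx, map_mul, Complex.conj_ofReal_cpow hx.le, ← Complex.exp_conj,
    map_add, map_natCast, Complex.cpow_add _ _ (Complex.ofReal_ne_zero.2 hx.ne'),
    Complex.cpow_natCast, map_mul, map_neg, Complex.conj_ofReal]
  ring

/-- For `Re α > −1/2` and `Im k > 0`, the span of the functions `x ↦ x^{α+n} e^{ikx}`,
`n ∈ ℕ`, is dense in `L²((0,∞))`. -/
theorem span_power_exp_dense (α k : ℂ) (hα : -(1 / 2 : ℝ) < α.re) (hk : 0 < k.im) :
    Dense ((Submodule.span ℂ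
        {g : Lp ℂ 2 (volume.restrict (Set.Ioi (0 : ℝ))) |
          ∃ n : ℕ, (g : ℝ → ℂ) =ᵐ[volume.restrict (Set.Ioi (0 : ℝ))]
            fun x : ℝ => (x : ℂ) ^ (α + n) * Complex.exp (Complex.I * k * x)} :
        Submodule ℂ (Lp ℂ 2 (volume.restrict (Set.Ioi (0 : ℝ))))) :
      Set (Lp ℂ 2 (volume.restrict (Set.Ioi (0 : ℝ))))) := by
  rw [Submodule.dense_iff_topologicalClosure_eq_top, Submodule.topologicalClosure_eq_top_iff,
    Submodule.eq_bot_iff]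
  intro f hf
  set z := -(Complex.I * k)
  have hz : 0 < z.re := by simpa [z] using hk
  have hg (n : ℕ) := memLp_two_cpow_mul_cexp (w := α + n) (z := z)
    (by simp; linarith [n.cast_nonneg (α := ℝ)]) hz
  have hmom (n : ℕ) : ∫ x : ℝ in Ioi 0,
      (x : ℂ) ^ n * ((x : ℂ) ^ conj α * cexp (-conj z * x) * f x) = 0 := by
    rw [← inner_toLp_eq_integral_pow_mul n (hg n) f]
    exact (Submodule.mem_orthogonal _ f).1 hf _
      (Submodule.subset_span ⟨n, by simpa [z] using (hg n).coeFn_toLp⟩)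
  have hh := isLaplaceIntegrable_cpow_mul_cexp_mul (w := conj α) (κ := conj z)
    (by simpa using hα) (Lp.memLp f)
  rw [Lp.eq_zero_iff_ae_eq_zero]
  filter_upwards [hh.ae_eq_zero_of_moments_eq_zero (by simpa using hz) hmom,
    ae_restrict_mem measurableSet_Ioi] with x hhx (hx : 0 < x)
  simpa [Complex.cpow_eq_zero_iff, hx.ne'] using hhx
end

section
/- Let ω, λ ∈ ℝ, let μ ∈ ℂ with Re μ = 0, and let (a,b) ∈ ℂ² ∖ {(0,0)} satisfy (ω+λ)a + μb = 0 and μa + (ω−λ)b = 0. Let f : (0,∞) → ℂ² be smooth, vanish for all sufficiently large x, and satisfy f(x) = c · x^μ (a,b) for all 0 < x < x₀, for some c ∈ ℂ and x₀ > 0. Then the function x ↦ f(x)* (D_{ω,λ}f)(x) is integrable on (0,∞) and Im ∫₀^∞ f(x)* (D_{ω,λ}f)(x) dx = −|c|² Im( conj(b) a ). -/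
/-!
Near `0` the function `f` is a multiple of the zero mode `x^μ (a, b)`, so the density
`f* D f` vanishes there, and it vanishes for large `x` as well. For real `ω, λ` the imaginary
part of the density is the derivative of `Im (f₁ conj f₂)`, so the imaginary part of the form
is the boundary term `-Im (f₁ conj f₂)` at a point where `f = c x^μ (a, b)`; there
`|x^μ| = 1` because `Re μ = 0`, which leaves `-|c|² Im (conj b a)`.
-/

open MeasureTheory Set Filter Topology ComplexConjugate

noncomputable def diracCoulombDensity (ω lam : ℂ) (f : ℝ → ℂ × ℂ) (x : ℝ) : ℂ :=
  conj (f x).1 * (diracCoulomb ω lam f x).1 + conj (f x).2 * (diracCoulomb ω lam f x).2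

theorem hasDerivAt_ofReal_cpow {x : ℝ} (hx : 0 < x) (μ : ℂ) :
    HasDerivAt (fun y : ℝ => (y : ℂ) ^ μ) (μ * (x : ℂ) ^ μ / x) x := by
  have hx' : (x : ℂ) ≠ 0 := Complex.ofReal_ne_zero.2 hx.ne'
  have h := (Complex.hasStrictDerivAt_cpow_const (Complex.ofReal_mem_slitPlane.2 hx)
    (c := μ)).hasDerivAt.comp_ofReal
  rwa [Complex.cpow_sub _ _ hx', Complex.cpow_one, ← mul_div_assoc] at h

theorem diracCoulomb_eq_zero_of_eventuallyEq_zeroMode {ω lam μ a b c : ℂ}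
    (h1 : (ω + lam) * a + μ * b = 0) (h2 : μ * a + (ω - lam) * b = 0)
    {f : ℝ → ℂ × ℂ} {x : ℝ} (hx : 0 < x)
    (hf : f =ᶠ[𝓝 x] fun y => (c * (y : ℂ) ^ μ * a, c * (y : ℂ) ^ μ * b)) :
    diracCoulomb ω lam f x = 0 := by
  have hpow := hasDerivAt_ofReal_cpow hx μ
  have hd1 : deriv (fun y => (f y).1) x = c * (μ * (x : ℂ) ^ μ / x) * a :=
    (((hpow.const_mul c).mul_const a).congr_of_eventuallyEq (hf.fun_comp Prod.fst)).deriv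
  have hd2 : deriv (fun y => (f y).2) x = c * (μ * (x : ℂ) ^ μ / x) * b :=
    (((hpow.const_mul c).mul_const b).congr_of_eventuallyEq (hf.fun_comp Prod.snd)).deriv
  simp only [diracCoulomb, hd1, hd2, hf.eq_of_nhds, Prod.mk_eq_zero]
  constructor
  · linear_combination (-(c * (x : ℂ) ^ μ / x)) * h1
  · linear_combination (c * (x : ℂ) ^ μ / x) * h2

/-- The diagonal terms `-(λ ± ω)/x |fᵢ|²` of the density are real. -/
theorem hasDerivAt_im_fst_mul_conj_snd (ω lam : ℝ) {f : ℝ → ℂ × ℂ} {x : ℝ}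
    (hf : DifferentiableAt ℝ f x) :
    HasDerivAt (fun y => ((f y).1 * conj (f y).2).im)
      (diracCoulombDensity ω lam f x).im x := by
  have hd1 : HasDerivAt (fun y => (f y).1) (deriv (fun y => (f y).1) x) x :=
    hf.fst.hasDerivAt
  have hd2 : HasDerivAt (fun y => conj (f y).2) (conj (deriv (fun y => (f y).2) x)) x :=
    hf.snd.hasDerivAt.star
  have hprod : HasDerivAt (fun y => ((f y).1 * conj (f y).2).im)
      (deriv (fun y => (f y).1) x * conj (f x).2 + (f x).1 * conj (deriv (fun y => (f y).2) x)).im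
      x :=
    Complex.imCLM.hasFDerivAt.comp_hasDerivAt x (hd1.mul hd2)
  convert hprod using 1
  have hr1 : ((lam : ℂ) + ω) / x = ((lam + ω) / x : ℝ) := by push_cast; ring
  have hr2 : ((lam : ℂ) - ω) / x = ((lam - ω) / x : ℝ) := by push_cast; ring
  simp only [diracCoulombDensity, diracCoulomb, hr1, hr2, Complex.add_im,
    Complex.sub_im, Complex.neg_im, Complex.mul_im, Complex.sub_re,
    Complex.mul_re, Complex.neg_re, Complex.ofReal_re, Complex.ofReal_im, Complex.conj_re,
    Complex.conj_im]
  ring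

theorem continuousOn_diracCoulombDensity (ω lam : ℂ) {f : ℝ → ℂ × ℂ}
    (hf : ContDiffOn ℝ 1 f (Ioi 0)) : ContinuousOn (diracCoulombDensity ω lam f) (Ioi 0) := by
  have hc1 := hf.fst.continuousOn
  have hc2 := hf.snd.continuousOn
  have hd1 := hf.fst.continuousOn_deriv_of_isOpen isOpen_Ioi le_rfl
  have hd2 := hf.snd.continuousOn_deriv_of_isOpen isOpen_Ioi le_rfl
  have hinv : ∀ r : ℂ, ContinuousOn (fun x : ℝ => r / (x : ℂ)) (Ioi 0) := fun r =>
    continuousOn_const.div Complex.continuous_ofReal.continuousOn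
      fun x hx => Complex.ofReal_ne_zero.2 (ne_of_gt hx)
  exact (hc1.star.mul (((hinv _).neg.mul hc1).sub hd2)).add
    (hc2.star.mul (hd1.sub ((hinv _).mul hc2)))

theorem im_zeroMode_mul_conj {x : ℝ} (hx : 0 < x) {μ : ℂ} (hμ : μ.re = 0) (c a b : ℂ) :
    (c * (x : ℂ) ^ μ * a * conj (c * (x : ℂ) ^ μ * b)).im = ‖c‖ ^ 2 * (conj b * a).im := by
  have hunit : (x : ℂ) ^ μ * conj ((x : ℂ) ^ μ) = 1 := by
    rw [Complex.mul_conj', Complex.norm_cpow_eq_rpow_re_of_pos hx, hμ, Real.rpow_zero]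
    norm_num
  calc (c * (x : ℂ) ^ μ * a * conj (c * (x : ℂ) ^ μ * b)).im
      = (c * conj c * ((x : ℂ) ^ μ * conj ((x : ℂ) ^ μ)) * (conj b * a)).im := by
        simp only [map_mul]; ring_nf
    _ = ‖c‖ ^ 2 * (conj b * a).im := by
        rw [hunit, Complex.mul_conj', mul_one, ← Complex.ofReal_pow, Complex.im_ofReal_mul]

theorem integrableOn_and_im_setIntegral_eq_sub_of_hasDerivAt {g : ℝ → ℂ} {φ : ℝ → ℝ}
    {t : Set ℝ} {p q : ℝ} (hpq : p ≤ q) (ht : MeasurableSet t) (hpqt : Ioc p q ⊆ t)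
    (hg : ContinuousOn g (Icc p q)) (hφ : ∀ x ∈ Icc p q, HasDerivAt φ (g x).im x)
    (hzero : ∀ x ∈ t \ Ioc p q, g x = 0) :
    IntegrableOn g t ∧ (∫ x in t, g x).im = φ q - φ p := by
  have hgpq : IntervalIntegrable g volume p q := hg.intervalIntegrable_of_Icc hpq
  refine ⟨hgpq.1.of_forall_sdiff_eq_zero ht hzero, ?_⟩
  have him : ∫ x in p..q, (g x).im = (∫ x in p..q, g x).im :=
    Complex.imCLM.intervalIntegral_comp_comm hgpq
  rw [setIntegral_eq_of_subset_of_forall_sdiff_eq_zero ht hpqt hzero,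
    ← intervalIntegral.integral_of_le hpq, ← him]
  exact intervalIntegral.integral_eq_sub_of_hasDerivAt (by rwa [uIcc_of_le hpq])
    ((Complex.continuous_im.comp_continuousOn hg).intervalIntegrable_of_Icc hpq)

theorem diracCoulomb_im_form_boundary_general (ω lam : ℝ) (μ : ℂ) (hμ : μ.re = 0)
    (a b : ℂ)
    (h1 : ((ω : ℂ) + (lam : ℂ)) * a + μ * b = 0)
    (h2 : μ * a + ((ω : ℂ) - (lam : ℂ)) * b = 0)
    (f : ℝ → ℂ × ℂ) (hsm : ContDiffOn ℝ (⊤ : ℕ∞) f (Set.Ioi 0))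
    (hvan : ∃ X : ℝ, ∀ x : ℝ, X ≤ x → f x = 0)
    (c : ℂ) (x₀ : ℝ) (hx₀ : 0 < x₀)
    (hnear : ∀ x ∈ Set.Ioo (0 : ℝ) x₀, f x = (c * (x : ℂ) ^ μ * a, c * (x : ℂ) ^ μ * b)) :
    IntegrableOn
        (fun x => (starRingEnd ℂ) (f x).1 * (diracCoulomb (ω : ℂ) (lam : ℂ) f x).1 +
          (starRingEnd ℂ) (f x).2 * (diracCoulomb (ω : ℂ) (lam : ℂ) f x).2)
        (Set.Ioi 0) ∧
      (∫ x in Set.Ioi (0 : ℝ),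
          ((starRingEnd ℂ) (f x).1 * (diracCoulomb (ω : ℂ) (lam : ℂ) f x).1 +
            (starRingEnd ℂ) (f x).2 * (diracCoulomb (ω : ℂ) (lam : ℂ) f x).2)).im =
        -‖c‖ ^ 2 * ((starRingEnd ℂ) b * a).im := by
  obtain ⟨X, hX⟩ := hvan
  set g := diracCoulombDensity ω lam f
  change IntegrableOn g (Ioi 0) ∧ (∫ x in Ioi 0, g x).im = _
  obtain ⟨p, q, hp, hpx₀, hXq, hpq⟩ : ∃ p q : ℝ, 0 < p ∧ p < x₀ ∧ X ≤ q ∧ p ≤ q :=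
    ⟨x₀ / 2, max X x₀, by positivity, by linarith, le_max_left _ _, by
      linarith [le_max_right X x₀]⟩
  have hpqpos : Icc p q ⊆ Ioi 0 := fun x hx => hp.trans_le hx.1
  have hzero : ∀ x ∈ Ioi 0 \ Ioc p q, g x = 0 := by
    rintro x ⟨hx, hxpq⟩
    rcases le_or_gt x p with hxp | hqx
    · have hD : diracCoulomb ω lam f x = 0 := diracCoulomb_eq_zero_of_eventuallyEq_zeroMode h1 h2
        hx (eventually_of_mem (isOpen_Ioo.mem_nhds ⟨hx, hxp.trans_lt hpx₀⟩) hnear)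
      simp [g, diracCoulombDensity, hD]
    · simp [g, diracCoulombDensity, hX x (hXq.trans (le_of_not_ge fun h => hxpq ⟨hqx, h⟩))]
  have hderiv : ∀ x ∈ Icc p q, HasDerivAt (fun y => ((f y).1 * conj (f y).2).im) (g x).im x :=
    fun x hx => hasDerivAt_im_fst_mul_conj_snd ω lam
      ((hsm.contDiffAt (isOpen_Ioi.mem_nhds (hpqpos hx))).differentiableAt (by simp))
  have hg : ContinuousOn g (Icc p q) :=
    (continuousOn_diracCoulombDensity _ _ (hsm.of_le (by exact_mod_cast le_top))).mono hpqpos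
  refine (integrableOn_and_im_setIntegral_eq_sub_of_hasDerivAt hpq measurableSet_Ioi
    (Ioc_subset_Icc_self.trans hpqpos) hg hderiv hzero).imp_right fun h => ?_
  rw [h, hX q hXq, hnear p ⟨hp, hpx₀⟩, im_zeroMode_mul_conj hp hμ]
  simp

/-- For real `ω, λ`, purely imaginary `μ` and a zero-mode boundary datum `(a,b)`, the
imaginary part of the quadratic form of `D_{ω,λ}` on a function behaving like
`c·x^μ(a,b)` near `0` equals `−|c|² Im(conj(b)·a)`. -/
theorem diracCoulomb_im_form_boundary (ω lam : ℝ) (μ : ℂ) (hμ : μ.re = 0)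
    (a b : ℂ) (hab : (a, b) ≠ (0, 0))
    (h1 : ((ω : ℂ) + (lam : ℂ)) * a + μ * b = 0)
    (h2 : μ * a + ((ω : ℂ) - (lam : ℂ)) * b = 0)
    (f : ℝ → ℂ × ℂ) (hsm : ContDiffOn ℝ (⊤ : ℕ∞) f (Set.Ioi 0))
    (hvan : ∃ X : ℝ, ∀ x : ℝ, X ≤ x → f x = 0)
    (c : ℂ) (x₀ : ℝ) (hx₀ : 0 < x₀)
    (hnear : ∀ x ∈ Set.Ioo (0 : ℝ) x₀, f x = (c * (x : ℂ) ^ μ * a, c * (x : ℂ) ^ μ * b)) :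
    IntegrableOn
        (fun x => (starRingEnd ℂ) (f x).1 * (diracCoulomb (ω : ℂ) (lam : ℂ) f x).1 +
          (starRingEnd ℂ) (f x).2 * (diracCoulomb (ω : ℂ) (lam : ℂ) f x).2)
        (Set.Ioi 0) ∧
      (∫ x in Set.Ioi (0 : ℝ),
          ((starRingEnd ℂ) (f x).1 * (diracCoulomb (ω : ℂ) (lam : ℂ) f x).1 +
            (starRingEnd ℂ) (f x).2 * (diracCoulomb (ω : ℂ) (lam : ℂ) f x).2)).im =
        -‖c‖ ^ 2 * ((starRingEnd ℂ) b * a).im :=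
  diracCoulomb_im_form_boundary_general ω lam μ hμ a b h1 h2 f hsm hvan c x₀ hx₀ hnear
end

section
/- Let ω, λ, μ ∈ ℂ and (a,b) ∈ ℂ² ∖ {(0,0)} satisfy (ω+λ)a + μb = 0 and μa + (ω−λ)b = 0, and set η(x) = x^μ (a,b). Let f, g : (0,∞) → ℂ² be smooth functions that vanish for all sufficiently large x and satisfy f(x) = c₁ η(x) and g(x) = c₂ η(x) for all 0 < x < x₀, for some c₁, c₂ ∈ ℂ and x₀ > 0. Then x ↦ f(x)ᵀ(D_{ω,λ}g)(x) and x ↦ (D_{ω,λ}f)(x)ᵀ g(x) are integrable on (0,∞) and ∫₀^∞ f(x)ᵀ (D_{ω,λ}g)(x) dx = ∫₀^∞ (D_{ω,λ}f)(x)ᵀ g(x) dx. -/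
/-!
On `(0, ∞)` the Lagrange identity `fᵀ(D g) - (D f)ᵀg = W'` holds with the Wronskian
`W = f₂g₁ - f₁g₂`; the `1/x` terms of `D` cancel because its potential part is symmetric.
Near `0` both `f` and `g` are multiples of the same vector `x^μ (a, b)`, so `W` vanishes there,
and `D f = D g = 0` because `η` is a zero mode; for large `x` everything vanishes. Hence all
integrands are continuous with compact support in `(0, ∞)`, and `∫ W' = 0`.
-/

open MeasureTheory

open Filter Set Topology

section CompactSupportInIoi

variable {E : Type*} [NormedAddCommGroup E] {a : ℝ}

theorem integrableOn_Ioi_of_continuousOn_of_eventuallyEq_zero {φ : ℝ → E}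
    (hφ : ContinuousOn φ (Ioi a)) (h₀ : φ =ᶠ[𝓝[>] a] 0) (h_top : φ =ᶠ[atTop] 0) :
    IntegrableOn φ (Ioi a) := by
  obtain ⟨ε, hε, hφε⟩ := mem_nhdsGT_iff_exists_Ioo_subset.1 h₀
  obtain ⟨X, hφX⟩ := eventually_atTop.1 h_top
  obtain ⟨b, hab, hbε⟩ := exists_between (mem_Ioi.1 hε)
  have hIcc : Icc b X ⊆ Ioi a := fun x hx => hab.trans_le hx.1
  refine ((hφ.mono hIcc).integrableOn_compact isCompact_Icc).of_forall_sdiff_eq_zero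
    measurableSet_Ioi fun x ⟨hxa, hx⟩ => ?_
  rcases lt_or_ge x b with hxb | hxb
  · exact hφε ⟨hxa, hxb.trans hbε⟩
  · exact hφX x (not_le.1 fun hxX => hx ⟨hxb, hxX⟩).le

theorem integral_Ioi_eq_zero_of_hasDerivAt_of_eventuallyEq_zero [NormedSpace ℝ E]
    [CompleteSpace E] {W W' : ℝ → E} (hderiv : ∀ x ∈ Ioi a, HasDerivAt W (W' x) x)
    (hint : IntegrableOn W' (Ioi a)) (h₀ : W =ᶠ[𝓝[>] a] 0) (h_top : W =ᶠ[atTop] 0) :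
    ∫ x in Ioi a, W' x = 0 := by
  obtain ⟨ε, hε, hWε⟩ := mem_nhdsGT_iff_exists_Ioo_subset.1 h₀
  obtain ⟨b, hab, hbε⟩ := exists_between (mem_Ioi.1 hε)
  have hW'ε : ∀ x ∈ Ioo a ε, W' x = 0 := fun x hx =>
    (hderiv x hx.1).unique <| (hasDerivAt_const x (0 : E)).congr_of_eventuallyEq <|
      eventually_of_mem (isOpen_Ioo.mem_nhds hx) hWε
  calc ∫ x in Ioi a, W' x = ∫ x in Ioi b, W' x :=
        setIntegral_eq_of_subset_of_forall_sdiff_eq_zero measurableSet_Ioi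
          (Ioi_subset_Ioi hab.le) fun x ⟨hxa, hxb⟩ => hW'ε x ⟨hxa, (not_lt.1 hxb).trans_lt hbε⟩
    _ = 0 - W b := integral_Ioi_of_hasDerivAt_of_tendsto'
        (fun x hx => hderiv x (hab.trans_le hx)) (hint.mono_set (Ioi_subset_Ioi hab.le))
        (tendsto_const_nhds.congr' h_top.symm)
    _ = 0 := by rw [hWε ⟨hab, hbε⟩, Pi.zero_apply, sub_zero]

end CompactSupportInIoi

def pairing (v w : ℂ × ℂ) : ℂ := v.1 * w.1 + v.2 * w.2

/-- `wronskian f g = -i fᵀσ₂g`, the boundary form of `D`. -/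
def wronskian (f g : ℝ → ℂ × ℂ) (x : ℝ) : ℂ := (f x).2 * (g x).1 - (f x).1 * (g x).2

theorem ContinuousOn.pairing {s : Set ℝ} {f g : ℝ → ℂ × ℂ} (hf : ContinuousOn f s)
    (hg : ContinuousOn g s) : ContinuousOn (fun x => _root_.pairing (f x) (g x)) s := by
  unfold _root_.pairing
  fun_prop

section DiracCoulomb

variable {ω lam : ℂ} {f g : ℝ → ℂ × ℂ} {x : ℝ}

theorem diracCoulomb_congr_of_eventuallyEq (h : f =ᶠ[𝓝 x] g) :
    diracCoulomb ω lam f x = diracCoulomb ω lam g x := by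
  have h₁ : (fun y => (f y).1) =ᶠ[𝓝 x] fun y => (g y).1 := h.fun_comp Prod.fst
  have h₂ : (fun y => (f y).2) =ᶠ[𝓝 x] fun y => (g y).2 := h.fun_comp Prod.snd
  simp only [diracCoulomb, h.eq_of_nhds, h₁.deriv_eq, h₂.deriv_eq]

theorem diracCoulomb_zeroMode {μ a b : ℂ} (h₁ : (ω + lam) * a + μ * b = 0)
    (h₂ : μ * a + (ω - lam) * b = 0) (c : ℂ) (hx : 0 < x) :
    diracCoulomb ω lam (fun y => (c * (y : ℂ) ^ μ * a, c * (y : ℂ) ^ μ * b)) x = 0 := by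
  have hx' : (x : ℂ) ≠ 0 := Complex.ofReal_ne_zero.2 hx.ne'
  have hη : HasDerivAt (fun y : ℝ => (y : ℂ) ^ μ) (μ * (x : ℂ) ^ (μ - 1)) x :=
    (Complex.hasStrictDerivAt_cpow_const
      (Complex.ofReal_mem_slitPlane.2 hx)).hasDerivAt.comp_ofReal
  simp only [diracCoulomb, ((hη.const_mul c).mul_const a).deriv,
    ((hη.const_mul c).mul_const b).deriv, Complex.cpow_sub _ _ hx', Complex.cpow_one,
    Prod.mk_eq_zero]
  constructor
  · field_simp
    linear_combination (-(c * (x : ℂ) ^ μ)) * h₁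
  · field_simp
    linear_combination (c * (x : ℂ) ^ μ) * h₂

theorem diracCoulomb_eventuallyEq_zero_of_eqOn_zeroMode {μ a b c : ℂ}
    (h₁ : (ω + lam) * a + μ * b = 0) (h₂ : μ * a + (ω - lam) * b = 0) {x₀ : ℝ} (hx₀ : 0 < x₀)
    (hf : ∀ x ∈ Ioo 0 x₀, f x = (c * (x : ℂ) ^ μ * a, c * (x : ℂ) ^ μ * b)) :
    diracCoulomb ω lam f =ᶠ[𝓝[>] 0] 0 :=
  eventually_of_mem (Ioo_mem_nhdsGT hx₀) fun _ hx =>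
    (diracCoulomb_congr_of_eventuallyEq (eventually_of_mem (isOpen_Ioo.mem_nhds hx) hf)).trans
      (diracCoulomb_zeroMode h₁ h₂ c hx.1)

theorem hasDerivAt_wronskian (hf : DifferentiableAt ℝ f x) (hg : DifferentiableAt ℝ g x) :
    HasDerivAt (wronskian f g)
      (pairing (f x) (diracCoulomb ω lam g x) - pairing (diracCoulomb ω lam f x) (g x)) x := by
  refine ((hf.snd.hasDerivAt.fun_mul hg.fst.hasDerivAt).fun_sub
    (hf.fst.hasDerivAt.fun_mul hg.snd.hasDerivAt)).congr_deriv ?_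
  simp only [pairing, diracCoulomb]
  ring

theorem continuousOn_diracCoulomb (hf : ContDiffOn ℝ 1 f (Ioi 0)) :
    ContinuousOn (diracCoulomb ω lam f) (Ioi 0) := by
  have hf₁ := hf.fst.continuousOn_deriv_of_isOpen isOpen_Ioi le_rfl
  have hf₂ := hf.snd.continuousOn_deriv_of_isOpen isOpen_Ioi le_rfl
  have hinv : ContinuousOn (fun y : ℝ => (y : ℂ)⁻¹) (Ioi 0) :=
    Complex.continuous_ofReal.continuousOn.inv₀ fun y hy => Complex.ofReal_ne_zero.2 hy.ne'
  have hfc := hf.continuousOn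
  unfold diracCoulomb
  simp only [div_eq_mul_inv]
  fun_prop

end DiracCoulomb

theorem diracCoulomb_self_transposed_boundary_general (ω lam μ : ℂ)
    (a b : ℂ)
    (h1 : (ω + lam) * a + μ * b = 0) (h2 : μ * a + (ω - lam) * b = 0)
    (f g : ℝ → ℂ × ℂ)
    (hfsm : ContDiffOn ℝ (⊤ : ℕ∞) f (Set.Ioi 0))
    (hgsm : ContDiffOn ℝ (⊤ : ℕ∞) g (Set.Ioi 0))
    (hfvan : ∃ X : ℝ, ∀ x : ℝ, X ≤ x → f x = 0)
    (hgvan : ∃ X : ℝ, ∀ x : ℝ, X ≤ x → g x = 0)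
    (c₁ c₂ : ℂ) (x₀ : ℝ) (hx₀ : 0 < x₀)
    (hfnear : ∀ x ∈ Set.Ioo (0 : ℝ) x₀, f x = (c₁ * (x : ℂ) ^ μ * a, c₁ * (x : ℂ) ^ μ * b))
    (hgnear : ∀ x ∈ Set.Ioo (0 : ℝ) x₀, g x = (c₂ * (x : ℂ) ^ μ * a, c₂ * (x : ℂ) ^ μ * b)) :
    IntegrableOn
        (fun x => (f x).1 * (diracCoulomb ω lam g x).1 + (f x).2 * (diracCoulomb ω lam g x).2)
        (Set.Ioi 0) ∧
      IntegrableOn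
        (fun x => (diracCoulomb ω lam f x).1 * (g x).1 + (diracCoulomb ω lam f x).2 * (g x).2)
        (Set.Ioi 0) ∧
      (∫ x in Set.Ioi (0 : ℝ),
          ((f x).1 * (diracCoulomb ω lam g x).1 + (f x).2 * (diracCoulomb ω lam g x).2)) =
        ∫ x in Set.Ioi (0 : ℝ),
          ((diracCoulomb ω lam f x).1 * (g x).1 + (diracCoulomb ω lam f x).2 * (g x).2) := by
  have hf : ContDiffOn ℝ 1 f (Ioi 0) := hfsm.of_le (by exact_mod_cast le_top)
  have hg : ContDiffOn ℝ 1 g (Ioi 0) := hgsm.of_le (by exact_mod_cast le_top)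
  have hf_top : f =ᶠ[atTop] 0 := eventually_atTop.2 hfvan
  have hg_top : g =ᶠ[atTop] 0 := eventually_atTop.2 hgvan
  have hDf₀ := diracCoulomb_eventuallyEq_zero_of_eqOn_zeroMode h1 h2 hx₀ hfnear
  have hDg₀ := diracCoulomb_eventuallyEq_zero_of_eqOn_zeroMode h1 h2 hx₀ hgnear
  have hI₁ : IntegrableOn (fun x => pairing (f x) (diracCoulomb ω lam g x)) (Ioi 0) :=
    integrableOn_Ioi_of_continuousOn_of_eventuallyEq_zero
      (hf.continuousOn.pairing (continuousOn_diracCoulomb hg))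
      (hDg₀.mono fun x hx => by simp [pairing, hx]) (hf_top.mono fun x hx => by simp [pairing, hx])
  have hI₂ : IntegrableOn (fun x => pairing (diracCoulomb ω lam f x) (g x)) (Ioi 0) :=
    integrableOn_Ioi_of_continuousOn_of_eventuallyEq_zero
      ((continuousOn_diracCoulomb hf).pairing hg.continuousOn)
      (hDf₀.mono fun x hx => by simp [pairing, hx]) (hg_top.mono fun x hx => by simp [pairing, hx])
  refine ⟨hI₁, hI₂, ?_⟩
  have hW₀ : wronskian f g =ᶠ[𝓝[>] 0] 0 := eventually_of_mem (Ioo_mem_nhdsGT hx₀) fun x hx => by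
    simp only [wronskian, hfnear x hx, hgnear x hx, Pi.zero_apply]
    ring
  have hW_top : wronskian f g =ᶠ[atTop] 0 := hf_top.mono fun x hx => by simp [wronskian, hx]
  have hW' := integral_Ioi_eq_zero_of_hasDerivAt_of_eventuallyEq_zero
    (fun x hx => hasDerivAt_wronskian
      ((hf.differentiableOn one_ne_zero).differentiableAt (isOpen_Ioi.mem_nhds hx))
      ((hg.differentiableOn one_ne_zero).differentiableAt (isOpen_Ioi.mem_nhds hx)))
    (hI₁.sub hI₂) hW₀ hW_top
  rwa [integral_sub hI₁ hI₂, sub_eq_zero] at hW'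

/-- Self-transposedness of the homogeneous realization with boundary condition `[a:b]`:
for smooth functions equal to multiples of the zero mode `η(x) = x^μ(a,b)` near `0` and
vanishing for large `x`, one has `⟨f|D g⟩ = ⟨D f|g⟩`. -/
theorem diracCoulomb_self_transposed_boundary (ω lam μ : ℂ)
    (a b : ℂ) (hab : (a, b) ≠ (0, 0))
    (h1 : (ω + lam) * a + μ * b = 0) (h2 : μ * a + (ω - lam) * b = 0)
    (f g : ℝ → ℂ × ℂ)
    (hfsm : ContDiffOn ℝ (⊤ : ℕ∞) f (Set.Ioi 0))
    (hgsm : ContDiffOn ℝ (⊤ : ℕ∞) g (Set.Ioi 0))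
    (hfvan : ∃ X : ℝ, ∀ x : ℝ, X ≤ x → f x = 0)
    (hgvan : ∃ X : ℝ, ∀ x : ℝ, X ≤ x → g x = 0)
    (c₁ c₂ : ℂ) (x₀ : ℝ) (hx₀ : 0 < x₀)
    (hfnear : ∀ x ∈ Set.Ioo (0 : ℝ) x₀, f x = (c₁ * (x : ℂ) ^ μ * a, c₁ * (x : ℂ) ^ μ * b))
    (hgnear : ∀ x ∈ Set.Ioo (0 : ℝ) x₀, g x = (c₂ * (x : ℂ) ^ μ * a, c₂ * (x : ℂ) ^ μ * b)) :
    IntegrableOn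
        (fun x => (f x).1 * (diracCoulomb ω lam g x).1 + (f x).2 * (diracCoulomb ω lam g x).2)
        (Set.Ioi 0) ∧
      IntegrableOn
        (fun x => (diracCoulomb ω lam f x).1 * (g x).1 + (diracCoulomb ω lam f x).2 * (g x).2)
        (Set.Ioi 0) ∧
      (∫ x in Set.Ioi (0 : ℝ),
          ((f x).1 * (diracCoulomb ω lam g x).1 + (f x).2 * (diracCoulomb ω lam g x).2)) =
        ∫ x in Set.Ioi (0 : ℝ),
          ((diracCoulomb ω lam f x).1 * (g x).1 + (diracCoulomb ω lam f x).2 * (g x).2) :=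
  diracCoulomb_self_transposed_boundary_general ω lam μ a b h1 h2 f g hfsm hgsm hfvan hgvan c₁ c₂ x₀
    hx₀ hfnear hgnear
end
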